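/- arXiv:1206.5373 — 7 statements merged into one kernel-verified Lean document; each statement's English description precedes it below -/
import Mathlib

section
/- Let (X,G) be a small Polish structure and H a countable group. Then for every n < ω there are only countably many orbits on H(X)ⁿ under the diagonal action of G; that is, (H(X),G) is small. -/
open Function

variable (X H : Type*)

/-- `H(X)`: the direct sum of copies of `H` indexed by `X`, realized as the subgroup of
the product group `X → H` consisting of finitely supported functions. -/
def FinSupp [Group H] : Subgroup (X → H) where
  carrier := {f | (Function.mulSupport f).Finite}
  one_mem' := by simp [Function.mulSupport_one]
  mul_mem' {f g} hf hg := (hf.union hg).subset (Function.mulSupport_mul f g)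
  inv_mem' {f} hf := by simpa [Function.mulSupport_inv] using hf

variable (G : Type*) [Group G] [Group H] [MulAction G X]

/-- The action of `G` on `H(X)` given by `(g • y) x = y (g⁻¹ • x)`. -/
instance : MulAction G ↥(FinSupp X H) where
  smul g y := ⟨fun x => (y : X → H) (g⁻¹ • x), by
    show (Function.mulSupport ((y : X → H) ∘ (fun x => g⁻¹ • x))).Finite
    rw [Function.mulSupport_comp_eq_preimage]
    exact y.2.preimage ((MulAction.injective (g⁻¹ : G)).injOn)⟩
  one_smul y := Subtype.ext <| funext fun x => by
    show (y : X → H) ((1 : G)⁻¹ • x) = (y : X → H) x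
    rw [inv_one, one_smul]
  mul_smul g₁ g₂ y := Subtype.ext <| funext fun x => by
    show (y : X → H) ((g₁ * g₂)⁻¹ • x) = (y : X → H) (g₂⁻¹ • g₁⁻¹ • x)
    rw [mul_inv_rev, mul_smul]

lemma smul_finSupp_apply (g : G) (y : ↥(FinSupp X H)) (x : X) :
    ((g • y : ↥(FinSupp X H)) : X → H) x = (y : X → H) (g⁻¹ • x) := rfl

/-! A tuple `y ∈ H(X)ⁿ` is recovered from an enumeration `s : Fin m → X` of the union of the
supports of its entries together with the values `y i (s j)`. The assembly map
`(s, values) ↦ y` is `G`-equivariant in `s` and `G` does not move the values, so every orbit on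
`H(X)ⁿ` is the image of an orbit on `Xᵐ` under one of countably many assembly maps, indexed by
`m` and the values in `Hⁿˣᵐ`. -/

open MulAction

theorem countable_orbitRel_quotient_of_forall_exists_apply_eq {G Y ι : Type*} [Group G]
    [MulAction G Y] [Countable ι] {Z : ι → Type*} [∀ i, MulAction G (Z i)]
    [∀ i, Countable (Quotient (orbitRel G (Z i)))] (f : ∀ i, Z i →[G] Y)
    (hf : ∀ y, ∃ i z, f i z = y) : Countable (Quotient (orbitRel G Y)) := by
  let F : (Σ i, Quotient (orbitRel G (Z i))) → Quotient (orbitRel G Y) := fun p =>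
    Quotient.map (sa := orbitRel G (Z p.1)) (sb := orbitRel G Y) (f p.1)
      (fun _ _ ⟨g, hg⟩ => ⟨g, (map_smul (f p.1) g _).symm.trans (congrArg (f p.1) hg)⟩) p.2
  refine Function.Surjective.countable (f := F) fun q => ?_
  obtain ⟨y, rfl⟩ := Quotient.exists_rep q
  obtain ⟨i, z, rfl⟩ := hf y
  exact ⟨⟨i, ⟦z⟧⟩, rfl⟩

namespace FinSupp

variable {X H G}

/-- At a point hit twice by a non-injective `s`, `Function.extend` chooses one of the
competing values of `w`. -/
noncomputable def extend {ι : Type*} [Finite ι] (s : ι → X) (w : ι → H) : FinSupp X H :=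
  ⟨Function.extend s w 1,
    ((Set.toFinite (mulSupport w)).image s).subset mulSupport_extend_one_subset⟩

lemma extend_smul {ι : Type*} [Finite ι] (g : G) (s : ι → X) (w : ι → H) :
    extend (g • s) w = g • extend s w := by
  classical
  ext x
  have hmem : (fun i => (g • s) i = x) = (fun i => s i = g⁻¹ • x) :=
    funext fun i => propext (smul_eq_iff_eq_inv_smul g)
  rw [smul_finSupp_apply]
  show Function.extend (g • s) w 1 x = Function.extend s w 1 (g⁻¹ • x)
  rw [Function.extend_def, Function.extend_def]
  split_ifs with hx hx' hx'
  · congr 2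
  · exact absurd (hmem ▸ hx) hx'
  · exact absurd (hmem ▸ hx') hx
  · rfl

lemma exists_extend_eq {n : ℕ} (y : Fin n → FinSupp X H) :
    ∃ (m : ℕ) (s : Fin m → X) (w : Fin n → Fin m → H), (fun i => extend s (w i)) = y := by
  obtain ⟨m, s, hs, hrange⟩ := (Set.finite_iUnion fun i => (y i).2).fin_param
  refine ⟨m, s, fun i => (y i : X → H) ∘ s, funext fun i => Subtype.ext <| funext fun x => ?_⟩
  show Function.extend s ((y i : X → H) ∘ s) 1 x = (y i : X → H) x
  by_cases hx : ∃ j, s j = x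
  · obtain ⟨j, rfl⟩ := hx
    exact hs.extend_apply _ _ j
  · rw [Function.extend_apply' _ _ _ hx, Pi.one_apply, eq_comm, ← notMem_mulSupport]
    exact fun hxy => hx (hrange.symm ▸ Set.mem_iUnion.mpr ⟨i, hxy⟩ : x ∈ Set.range s)

end FinSupp

theorem statement2
    (hsmall : ∀ n : ℕ, Countable (Quotient (MulAction.orbitRel G (Fin n → X))))
    [Countable H] :
    ∀ n : ℕ, Countable (Quotient (MulAction.orbitRel G (Fin n → ↥(FinSupp X H)))) := by
  intro n
  let f (p : Σ m : ℕ, Fin n → Fin m → H) : (Fin p.1 → X) →[G] (Fin n → FinSupp X H) :=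
    { toFun := fun s i => FinSupp.extend s (p.2 i)
      map_smul' := fun g s => funext fun i => FinSupp.extend_smul g s (p.2 i) }
  have : ∀ p : Σ m : ℕ, Fin n → Fin m → H, Countable (Quotient (orbitRel G (Fin p.1 → X))) :=
    fun p => hsmall p.1
  refine countable_orbitRel_quotient_of_forall_exists_apply_eq f fun y => ?_
  obtain ⟨m, s, w, rfl⟩ := FinSupp.exists_extend_eq y
  exact ⟨⟨m, w⟩, s, rfl⟩
end

section
/- Let (X,G) be a Polish structure and H a countable group. Then for all finite subsets A, B, C of H(X) (regarded as finite tuples via fixed enumerations): A is nm-independent from B over C in the Polish structure (H(X),G) if and only if Ã is nm-independent from B̃ over C̃ in (X,G). -/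
open Function

variable (X H : Type*)

variable (G : Type*) [Group G] [Group H] [MulAction G X]

/-- The pointwise stabilizer of a set `A ⊆ X` in `G`. -/
def fixPt (G : Type*) [Group G] (X : Type*) [MulAction G X] (A : Set X) : Subgroup G where
  carrier := {g | ∀ x ∈ A, g • x = x}
  one_mem' := fun x _ => one_smul G x
  mul_mem' {a b} ha hb := fun x hx => by rw [mul_smul, hb x hx, ha x hx]
  inv_mem' {a} ha := fun x hx => by
    conv_lhs => rw [← ha x hx]
    rw [inv_smul_smul]

/-- The orbit `o(a/A)` of a finite tuple `a` over a set `A`: the orbit of `a` under the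
pointwise stabilizer `G_A`, acting diagonally. -/
def orbitOver (G : Type*) [Group G] (X : Type*) [MulAction G X] {n : ℕ}
    (A : Set X) (a : Fin n → X) : Set (Fin n → X) :=
  {b | ∃ g ∈ fixPt G X A, (fun i => g • a i) = b}

/-- `a` is nm-independent from `B` over `A` (written `a ⫝_A B`): the set of those `g` in the
pointwise stabilizer `G_A` with `g • a ∈ o(a/A ∪ B)` is non-meager in `G_A` (carrying the
subspace topology from `G`). -/
def NMIndep (G : Type*) [Group G] [TopologicalSpace G] (X : Type*) [MulAction G X]
    {n : ℕ} (a : Fin n → X) (A B : Set X) : Prop :=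
  ¬ IsMeagre {g : ↥(fixPt G X A) | (fun i => (g : G) • a i) ∈ orbitOver G X (A ∪ B) a}

/-- `a ⫝_A B` for a single element `a`. -/
def NMIndep1 (G : Type*) [Group G] [TopologicalSpace G] (X : Type*) [MulAction G X]
    (a : X) (A B : Set X) : Prop :=
  NMIndep G X (fun _ : Fin 1 => a) A B

/-- `Ã ⊆ X` for a set `A ⊆ H(X)`: the union of the supports of the members of `A`. -/
def tildeSet (A : Set ↥(FinSupp X H)) : Set X :=
  ⋃ y ∈ A, Function.mulSupport (y : X → H)

/-!
Put `L = G_C`, `Q = G_{C ∪ B}`, `S = G_A` for the action on `H(X)` and `K = G_{C̃}`,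
`P = G_{C̃ ∪ B̃}`, `R = G_{Ã}` for the action on `X`. Then `A ⫝_C B` says that `L ∩ QS` is
non-meagre in `L`, and `Ã ⫝_{C̃} B̃` says that `K ∩ PR` is non-meagre in `K`. Each of `K, P, R`
is a subgroup of finite index of `L, Q, S` respectively (the kernel of the action on a finite set
of supports), so `K` is clopen in `L`, `QS` is a finite union of translates `iPRj` and `L` a
finite union of cosets of `K`. A non-meagre piece of such a union contains a point, and the
two-sided translation of `L` determined by that point carries the piece onto `L ∩ PR`, resp.
`K ∩ PR`. The converse is the inclusion `K ∩ PR ⊆ L ∩ QS`, with `K` open in `L`.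
-/

open Pointwise Topology

section Meagre

variable {α β : Type*} [TopologicalSpace α] [TopologicalSpace β]

lemma Topology.IsOpenEmbedding.isMeagre_preimage_iff {f : α → β} (hf : IsOpenEmbedding f)
    {s : Set β} (hs : s ⊆ Set.range f) : IsMeagre (f ⁻¹' s) ↔ IsMeagre s := by
  refine ⟨fun h => ?_, fun h => h.preimage_of_isOpenMap hf.continuous hf.isOpenMap⟩
  simpa [Set.image_preimage_eq_of_subset hs] using hf.isInducing.isMeagre_image h

lemma Homeomorph.isMeagre_preimage_iff (e : α ≃ₜ β) {s : Set β} :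
    IsMeagre (e ⁻¹' s) ↔ IsMeagre s :=
  e.isOpenEmbedding.isMeagre_preimage_iff (by simp)

end Meagre

namespace Subgroup

variable {G}

lemma mul_mul_mem_mul_iff {P R : Subgroup G} {p r x : G} (hp : p ∈ P) (hr : r ∈ R) :
    p * x * r ∈ (P : Set G) * R ↔ x ∈ (P : Set G) * R := by
  constructor
  · rintro ⟨p', hp', r', hr', h : p' * r' = p * x * r⟩
    refine ⟨p⁻¹ * p', P.mul_mem (P.inv_mem hp) hp', r' * r⁻¹, R.mul_mem hr' (R.inv_mem hr), ?_⟩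
    change p⁻¹ * p' * (r' * r⁻¹) = x
    rw [show p⁻¹ * p' * (r' * r⁻¹) = p⁻¹ * (p' * r') * r⁻¹ by group, h]
    group
  · rintro ⟨p', hp', r', hr', rfl⟩
    exact ⟨p * p', P.mul_mem hp hp', r' * r, R.mul_mem hr' hr, by group⟩

lemma exists_finite_subset_mul_of_finiteIndex (K L : Subgroup G)
    [(K.subgroupOf L).FiniteIndex] : ∃ s : Set G, s.Finite ∧ s ⊆ L ∧ (L : Set G) ⊆ s * K := by
  refine ⟨Set.range fun q : L ⧸ K.subgroupOf L => (q.out : G), Set.finite_range _,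
    Set.range_subset_iff.2 fun q => q.out.2, fun l hl => ?_⟩
  obtain ⟨k, hk⟩ := QuotientGroup.mk_out_eq_mul (K.subgroupOf L) ⟨l, hl⟩
  refine ⟨_, ⟨QuotientGroup.mk ⟨l, hl⟩, rfl⟩, ((k : L) : G)⁻¹, K.inv_mem k.2, ?_⟩
  simp [hk]

variable [TopologicalSpace G] {K L P Q R S : Subgroup G}

lemma isMeagre_mem_iff_of_isOpen (hKL : K ≤ L)
    (hK : IsOpen ((K.subgroupOf L : Subgroup L) : Set L)) (M : Set G) :
    IsMeagre {k : K | (k : G) ∈ M} ↔ IsMeagre {l : L | (l : G) ∈ M ∧ (l : G) ∈ K} := by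
  rw [← (IsOpenEmbedding.inclusion (s := (K : Set G)) hKL hK).isMeagre_preimage_iff]
  · exact iff_of_eq (congrArg _ (Set.ext fun k => (and_iff_left k.2).symm))
  · rintro l ⟨-, hl⟩
    exact ⟨⟨l, hl⟩, rfl⟩

variable [IsTopologicalGroup G]

lemma isOpen_subgroupOf_of_finiteIndex [(K.subgroupOf L).FiniteIndex]
    (hK : IsClosed (K : Set G)) : IsOpen ((K.subgroupOf L : Subgroup L) : Set L) :=
  (K.subgroupOf L).isOpen_of_isClosed_of_finiteIndex (hK.preimage continuous_subtype_val)

lemma isMeagre_mul_mul_mem_iff {a b : G} (ha : a ∈ L) (hb : b ∈ L) (M : Set G) :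
    IsMeagre {l : L | a * l * b ∈ M} ↔ IsMeagre {l : L | (l : G) ∈ M} :=
  ((Homeomorph.mulLeft (⟨a, ha⟩ : L)).trans
    (Homeomorph.mulRight (⟨b, hb⟩ : L))).isMeagre_preimage_iff (s := {l : L | (l : G) ∈ M})

lemma not_isMeagre_mem_mul_of_finiteIndex (hQL : Q ≤ L) (hPL : P ≤ L)
    [(P.subgroupOf Q).FiniteIndex] [(R.subgroupOf S).FiniteIndex]
    (h : ¬IsMeagre {l : L | (l : G) ∈ (Q : Set G) * S}) :
    ¬IsMeagre {l : L | (l : G) ∈ (P : Set G) * R} := by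
  obtain ⟨sQ, hsQ, hsQQ, hQ⟩ := exists_finite_subset_mul_of_finiteIndex P Q
  obtain ⟨sS, hsS, -, hS⟩ := exists_finite_subset_mul_of_finiteIndex R S
  have hcover : {l : L | (l : G) ∈ (Q : Set G) * S} ⊆
      ⋃ ij ∈ sQ ×ˢ sS, {l : L | ij.1⁻¹ * l * ij.2 ∈ (P : Set G) * R} := by
    rintro l ⟨q, hq, t, ht, hl : q * t = l⟩
    obtain ⟨i, hi, p, hp, rfl : i * p = q⟩ := hQ hq
    obtain ⟨j, hj, r, hr, hjr : j * r = t⁻¹⟩ := hS (S.inv_mem ht)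
    refine Set.mem_iUnion₂.2 ⟨(i, j), ⟨hi, hj⟩, p, hp, r⁻¹, R.inv_mem hr, ?_⟩
    have ht' : t = r⁻¹ * j⁻¹ := by rw [← inv_inv t, ← hjr]; group
    show p * r⁻¹ = i⁻¹ * (l : G) * j
    rw [← hl, ht']
    group
  obtain ⟨⟨i, j⟩, hij, hpiece⟩ :=
    exists_of_not_isMeagre_biUnion (hsQ.prod hsS).countable fun h' => h (h'.mono hcover)
  obtain ⟨l₀, p₀, hp₀, r₀, hr₀, hl₀ : p₀ * r₀ = i⁻¹ * l₀ * j⟩ := nonempty_of_not_isMeagre hpiece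
  have ha : i * p₀ ∈ L := L.mul_mem (hQL (hsQQ hij.1)) (hPL hp₀)
  have hb : (i * p₀)⁻¹ * l₀ ∈ L := L.mul_mem (L.inv_mem ha) l₀.2
  have key (l : G) : i⁻¹ * (i * p₀ * l * ((i * p₀)⁻¹ * l₀)) * j = p₀ * l * r₀ := by
    rw [show r₀ = p₀⁻¹ * (i⁻¹ * l₀ * j) by rw [← hl₀]; group]
    group
  have := (isMeagre_mul_mul_mem_iff ha hb {x : G | i⁻¹ * x * j ∈ (P : Set G) * R}).not.2 hpiece
  simpa only [Set.mem_ofPred_eq, key, mul_mul_mem_mul_iff hp₀ hr₀] using this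

lemma not_isMeagre_restrict_of_finiteIndex (hKL : K ≤ L) (hPK : P ≤ K)
    [(K.subgroupOf L).FiniteIndex] (hK : IsClosed (K : Set G))
    (h : ¬IsMeagre {l : L | (l : G) ∈ (P : Set G) * R}) :
    ¬IsMeagre {k : K | (k : G) ∈ (P : Set G) * R} := by
  obtain ⟨s, hs, -, hL⟩ := exists_finite_subset_mul_of_finiteIndex K L
  have hcover : {l : L | (l : G) ∈ (P : Set G) * R} ⊆
      ⋃ g ∈ s, {l : L | (l : G) ∈ (P : Set G) * R ∧ l * g ∈ K} := by
    intro l hl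
    obtain ⟨g, hg, k, hk, hgk : g * k = (l : G)⁻¹⟩ := hL (L.inv_mem l.2)
    refine Set.mem_iUnion₂.2 ⟨g, hg, hl, ?_⟩
    rw [show (l : G) * g = k⁻¹ by rw [← inv_inv (l : G), ← hgk]; group]
    exact K.inv_mem hk
  obtain ⟨g, -, hpiece⟩ :=
    exists_of_not_isMeagre_biUnion hs.countable fun h' => h (h'.mono hcover)
  obtain ⟨l₀, ⟨p₀, hp₀, r₀, hr₀, hl₀ : p₀ * r₀ = l₀⟩, hl₀g⟩ := nonempty_of_not_isMeagre hpiece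
  have hr₀L : r₀ ∈ L := by
    rw [show r₀ = p₀⁻¹ * l₀ by rw [← hl₀]; group]
    exact L.mul_mem (L.inv_mem (hKL (hPK hp₀))) l₀.2
  have hr₀g : r₀ * g ∈ K := by
    rw [show r₀ * g = p₀⁻¹ * (l₀ * g) by rw [← hl₀]; group]
    exact K.mul_mem (K.inv_mem (hPK hp₀)) hl₀g
  have hsub : {l : L | (l : G) ∈ (P : Set G) * R ∧ l * g ∈ K} ⊆
      {l : L | 1 * (l : G) * r₀⁻¹ ∈ {x : G | x ∈ (P : Set G) * R ∧ x ∈ K}} := by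
    rintro l ⟨hlPR, hlg⟩
    refine ⟨(mul_mul_mem_mul_iff P.one_mem (R.inv_mem hr₀)).2 hlPR, ?_⟩
    rw [show 1 * (l : G) * r₀⁻¹ = l * g * (r₀ * g)⁻¹ by group]
    exact K.mul_mem hlg (K.inv_mem hr₀g)
  have := (isMeagre_mul_mul_mem_iff L.one_mem (L.inv_mem hr₀L) _).not.1
    fun hm => hpiece (hm.mono hsub)
  rwa [isMeagre_mem_iff_of_isOpen hKL (isOpen_subgroupOf_of_finiteIndex hK)]

theorem not_isMeagre_mem_mul_iff_of_finiteIndex (hKL : K ≤ L) (hQL : Q ≤ L) (hPK : P ≤ K)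
    (hPQ : P ≤ Q) (hRS : R ≤ S) [(K.subgroupOf L).FiniteIndex] [(P.subgroupOf Q).FiniteIndex]
    [(R.subgroupOf S).FiniteIndex] (hK : IsClosed (K : Set G)) :
    ¬IsMeagre {l : L | (l : G) ∈ (Q : Set G) * S} ↔
      ¬IsMeagre {k : K | (k : G) ∈ (P : Set G) * R} := by
  refine ⟨fun h => not_isMeagre_restrict_of_finiteIndex hKL hPK hK
    (not_isMeagre_mem_mul_of_finiteIndex hQL (hPK.trans hKL) h), fun h hQS => h ?_⟩
  rw [isMeagre_mem_iff_of_isOpen hKL (isOpen_subgroupOf_of_finiteIndex hK)]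
  exact hQS.mono fun l hl =>
    show (l : G) ∈ (Q : Set G) * S from Set.mul_subset_mul hPQ hRS hl.1

end Subgroup

section Stabilizers

variable {X H G}

lemma fixPt_mono {Z : Type*} [MulAction G Z] {A B : Set Z} (h : A ⊆ B) :
    fixPt G Z B ≤ fixPt G Z A :=
  fun _ hg x hx => hg x (h hx)

lemma isClosed_fixPt [TopologicalSpace G] (hstab : ∀ x : X, IsClosed {g : G | g • x = x})
    (A : Set X) : IsClosed (fixPt G X A : Set G) := by
  rw [show (fixPt G X A : Set G) = ⋂ x ∈ A, {g : G | g • x = x} by ext; simp [fixPt]]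
  exact isClosed_biInter fun x _ => hstab x

lemma finiteIndex_fixPt_subgroupOf {V : Subgroup G} {T : Set X} (hT : T.Finite)
    (hV : ∀ v ∈ V, ∀ x ∈ T, v • x ∈ T) : ((fixPt G X T).subgroupOf V).FiniteIndex := by
  let T' : SubMulAction V X := ⟨T, fun v x hx => hV v v.2 x hx⟩
  have : Finite T' := hT.to_subtype
  have hker : (fixPt G X T).subgroupOf V = (MulAction.toPermHom V T').ker := by
    ext v
    simp [Subgroup.mem_subgroupOf, Equiv.Perm.ext_iff, fixPt, T']
    rfl
  rw [hker]
  infer_instance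

lemma tildeSet_union (S T : Set (FinSupp X H)) :
    tildeSet X H (S ∪ T) = tildeSet X H S ∪ tildeSet X H T :=
  Set.biUnion_union S T _

lemma tildeSet_mono {S T : Set (FinSupp X H)} (h : S ⊆ T) : tildeSet X H S ⊆ tildeSet X H T :=
  Set.biUnion_subset_biUnion_left h

lemma tildeSet_finite {S : Set (FinSupp X H)} (hS : S.Finite) : (tildeSet X H S).Finite :=
  hS.biUnion fun y _ => y.2

lemma fixPt_tildeSet_le (S : Set (FinSupp X H)) :
    fixPt G X (tildeSet X H S) ≤ fixPt G (FinSupp X H) S := by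
  intro g hg y hy
  have hg' : g⁻¹ ∈ fixPt G X (tildeSet X H S) := inv_mem hg
  ext x
  rw [smul_finSupp_apply]
  have hfix : (y : X → H) (g⁻¹ • x) ≠ 1 ∨ (y : X → H) x ≠ 1 → g⁻¹ • x = x := by
    rintro (h | h)
    · simpa using (hg _ (Set.mem_biUnion hy h)).symm
    · exact hg' x (Set.mem_biUnion hy h)
  by_cases h : (y : X → H) (g⁻¹ • x) = 1 ∧ (y : X → H) x = 1
  · rw [h.1, h.2]
  · rw [hfix (not_and_or.1 h)]

lemma smul_mem_tildeSet {S : Set (FinSupp X H)} {g : G} (hg : g ∈ fixPt G (FinSupp X H) S)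
    {x : X} (hx : x ∈ tildeSet X H S) : g • x ∈ tildeSet X H S := by
  obtain ⟨y, hy, hxy⟩ := Set.mem_iUnion₂.1 hx
  refine Set.mem_biUnion hy ?_
  rwa [mem_mulSupport, ← hg y hy, smul_finSupp_apply, inv_smul_smul]

lemma finiteIndex_fixPt_tildeSet_subgroupOf {S : Set (FinSupp X H)} (hS : S.Finite) :
    ((fixPt G X (tildeSet X H S)).subgroupOf (fixPt G (FinSupp X H) S)).FiniteIndex :=
  finiteIndex_fixPt_subgroupOf (tildeSet_finite hS) fun _ hv _ hx => smul_mem_tildeSet hv hx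

lemma nmIndep_iff_not_isMeagre_mem_mul [TopologicalSpace G] {Z : Type*} [MulAction G Z] {n : ℕ}
    (a : Fin n → Z) (A B : Set Z) :
    NMIndep G Z a A B ↔ ¬IsMeagre {g : fixPt G Z A |
      (g : G) ∈ (fixPt G Z (A ∪ B) : Set G) * (fixPt G Z (Set.range a) : Set G)} := by
  refine not_congr (iff_of_eq (congrArg _ (Set.ext fun g => ⟨?_, ?_⟩)))
  · rintro ⟨h, hh, heq⟩
    refine ⟨h, hh, h⁻¹ * g, ?_, by group⟩
    rintro _ ⟨i, rfl⟩
    rw [mul_smul, ← congrFun heq i, inv_smul_smul]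
  · rintro ⟨h, hh, r, hr, hhr : h * r = g⟩
    refine ⟨h, hh, funext fun i => ?_⟩
    rw [← hhr, mul_smul, hr (a i) ⟨i, rfl⟩]

end Stabilizers

theorem statement3 [TopologicalSpace G] [IsTopologicalGroup G]
    (hstab : ∀ x : X, IsClosed {g : G | g • x = x})
    (A B C : Finset ↥(FinSupp X H)) {n m : ℕ}
    (a : Fin n → ↥(FinSupp X H)) (ha : Set.range a = (A : Set ↥(FinSupp X H)))
    (ta : Fin m → X) (hta : Set.range ta = tildeSet X H (A : Set ↥(FinSupp X H))) :
    NMIndep G ↥(FinSupp X H) a (C : Set ↥(FinSupp X H)) (B : Set ↥(FinSupp X H)) ↔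
      NMIndep G X ta (tildeSet X H (C : Set ↥(FinSupp X H)))
        (tildeSet X H (B : Set ↥(FinSupp X H))) := by
  rw [nmIndep_iff_not_isMeagre_mem_mul, nmIndep_iff_not_isMeagre_mem_mul, ha, hta,
    ← tildeSet_union]
  have := finiteIndex_fixPt_tildeSet_subgroupOf (G := G) C.finite_toSet
  have := finiteIndex_fixPt_tildeSet_subgroupOf (G := G) (C.finite_toSet.union B.finite_toSet)
  have := finiteIndex_fixPt_tildeSet_subgroupOf (G := G) A.finite_toSet
  exact Subgroup.not_isMeagre_mem_mul_iff_of_finiteIndex (fixPt_tildeSet_le _)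
    (fixPt_mono Set.subset_union_left) (fixPt_mono (tildeSet_mono Set.subset_union_left))
    (fixPt_tildeSet_le _) (fixPt_tildeSet_le _) (isClosed_fixPt hstab _)
end

section
/- Let (X,G) be a small Polish structure with X uncountable, and let H be a nontrivial countable group. Then in the small Polish group structure (H(X),G), no orbit is nm-generic: for every a ∈ H(X) and every finite A ⊆ H(X), the orbit o(a/A) is neither left nm-generic nor right nm-generic. -/
open Function

variable (X H : Type*)

variable (G : Type*) [Group G] [Group H] [MulAction G X]

/-!
Enumerate `Ã ∪ supp a` as a tuple `t`. Smallness and uncountability of `X` give a point `x`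
with uncountable `G_t`-orbit. By the Baire category theorem in the Polish group `G_A` some fibre
of `g ↦ o(g x, t)` is non-meagre; moving `x` into it yields `x' ∉ supp a` for which
`{g ∈ G_A | o(g x' / t) = o(x' / t)}` is non-meagre, and this makes `a` independent from
`b = δ_{x'} h` over `A`. On the other hand `b * a` and `a * b` do not vanish at `x'`, so every
`g` witnessing their independence from `A ∪ {b}` sends `x'` into a finite set. As `x'` has
uncountable orbit and closed stabilizer, such `g` form a meagre set: a coset of a closed
subgroup of uncountable index in a separable group is nowhere dense.
-/

section OrbitMeagre

open MulAction TopologicalSpace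

variable {T σ : Type*} [Group T] [MulAction T σ]

lemma isClosed_stabilizer_subgroup [TopologicalSpace T] {s : σ}
    (hs : IsClosed (stabilizer T s : Set T)) (K : Subgroup T) :
    IsClosed (stabilizer K s : Set K) :=
  hs.preimage continuous_subtype_val

lemma isClosed_fixPt_s5 [TopologicalSpace T] (h : ∀ s : σ, IsClosed (stabilizer T s : Set T))
    (A : Set σ) : IsClosed (fixPt T σ A : Set T) := by
  have : (fixPt T σ A : Set T) = ⋂ s ∈ A, (stabilizer T s : Set T) := by ext; simp [fixPt]
  exact this ▸ isClosed_biInter fun s _ => h s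

lemma setOf_smul_eq_eq_preimage_stabilizer {s : σ} (g₀ : T) :
    {t : T | t • s = g₀ • s} = (g₀⁻¹ * ·) ⁻¹' (stabilizer T s : Set T) := by
  ext t
  simp [mul_smul, inv_smul_eq_iff]

variable [TopologicalSpace T] [IsTopologicalGroup T]

lemma countable_orbit_of_interior_stabilizer_nonempty [SeparableSpace T] {s : σ}
    (h : (interior (stabilizer T s : Set T)).Nonempty) : (orbit T s).Countable := by
  obtain ⟨g, hg⟩ := h
  have := QuotientGroup.discreteTopology
    (Subgroup.isOpen_of_mem_nhds _ (mem_interior_iff_mem_nhds.1 hg))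
  have : SeparableSpace (T ⧸ stabilizer T s) := (QuotientGroup.isQuotientMap_mk _).separableSpace
  have : Countable (T ⧸ stabilizer T s) := separableSpace_iff_countable.1 inferInstance
  exact Set.countable_coe_iff.1 (orbitEquivQuotientStabilizer T s).injective.countable

lemma isClosed_setOf_smul_eq {s : σ} (hs : IsClosed (stabilizer T s : Set T)) (w : σ) :
    IsClosed {t : T | t • s = w} := by
  rcases Set.eq_empty_or_nonempty {t : T | t • s = w} with he | ⟨g₀, rfl⟩
  · exact he ▸ isClosed_empty
  · rw [setOf_smul_eq_eq_preimage_stabilizer]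
    exact hs.preimage (continuous_const_mul _)

lemma isNowhereDense_setOf_smul_eq [SeparableSpace T] {s : σ}
    (hs : IsClosed (stabilizer T s : Set T)) (horb : ¬ (orbit T s).Countable) (w : σ) :
    IsNowhereDense {t : T | t • s = w} := by
  rw [(isClosed_setOf_smul_eq hs w).isNowhereDense_iff]
  rcases Set.eq_empty_or_nonempty {t : T | t • s = w} with he | ⟨g₀, rfl⟩
  · rw [he, interior_empty]
  · rw [setOf_smul_eq_eq_preimage_stabilizer, ← Set.not_nonempty_iff_eq_empty]
    rintro ⟨t, ht⟩
    exact horb (countable_orbit_of_interior_stabilizer_nonempty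
      ⟨_, (Homeomorph.mulLeft g₀⁻¹).preimage_interior _ ▸ ht⟩)

lemma isMeagre_setOf_smul_mem [SeparableSpace T] {s : σ}
    (hs : IsClosed (stabilizer T s : Set T)) (horb : ¬ (orbit T s).Countable) {F : Set σ}
    (hF : F.Countable) : IsMeagre {t : T | t • s ∈ F} := by
  have : {t : T | t • s ∈ F} = ⋃ w ∈ F, {t : T | t • s = w} := by ext; simp
  rw [this]
  exact isMeagre_biUnion hF fun w _ => (isNowhereDense_setOf_smul_eq hs horb w).isMeagre

lemma exists_not_isMeagre_setOf_apply_smul_eq [BaireSpace T] {Q : Type*} [Countable Q]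
    (f : σ → Q) (x : σ) {M : Set T} (hM : IsMeagre M) :
    ∃ g ∉ M, ¬ IsMeagre {t : T | f (t • g • x) = f (g • x)} := by
  obtain ⟨q, hq⟩ : ∃ q, ¬ IsMeagre {t : T | f (t • x) = q} := by
    by_contra! h
    refine not_isMeagre_of_isOpen (X := T) isOpen_univ Set.univ_nonempty ?_
    simpa [Set.iUnion_ofPred] using (isMeagre_iUnion h : IsMeagre (⋃ q, {t : T | f (t • x) = q}))
  obtain ⟨g, hgq, hgM⟩ : ({t : T | f (t • x) = q} \ M).Nonempty :=
    nonempty_of_not_isMeagre fun h => hq ((h.union hM).mono fun t ht =>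
      (em (t ∈ M)).elim Or.inr (Or.inl ⟨ht, ·⟩))
  refine ⟨g, hgM, fun h => hq ?_⟩
  have : {t : T | f (t • x) = q} = (· * g⁻¹) ⁻¹' {t : T | f (t • g • x) = f (g • x)} := by
    ext t
    simp [← mul_smul, hgq.symm]
  rw [this]
  exact h.preimage_of_isOpenMap (continuous_mul_const _) (Homeomorph.mulRight g⁻¹).isOpenMap

end OrbitMeagre

namespace FinSupp

open MulAction

variable {X H G}

lemma smul_eq_self_iff {g : G} {y : FinSupp X H} :
    g • y = y ↔ ∀ x ∈ mulSupport (y : X → H), (y : X → H) (g • x) = (y : X → H) x := by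
  constructor
  · intro hg x _
    calc (y : X → H) (g • x) = ((g • y : FinSupp X H) : X → H) (g • x) := by rw [hg]
      _ = (y : X → H) x := by rw [smul_finSupp_apply, inv_smul_smul]
  · intro h
    have hmaps : Set.MapsTo (g • ·) (mulSupport (y : X → H)) (mulSupport (y : X → H)) :=
      fun x hx => by simpa [mem_mulSupport, h x hx] using hx
    have hsurj := (y.2.injOn_iff_bijOn_of_mapsTo hmaps).1 (MulAction.injective g).injOn |>.surjOn
    ext z
    rw [smul_finSupp_apply]
    by_cases hz : z ∈ mulSupport (y : X → H)
    · obtain ⟨x, hx, rfl⟩ := hsurj hz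
      rw [inv_smul_smul, h x hx]
    · have hz' : g⁻¹ • z ∉ mulSupport (y : X → H) := fun h' => hz (by simpa using hmaps h')
      rw [notMem_mulSupport.1 hz, notMem_mulSupport.1 hz']

lemma smul_eq_self_of_mem_fixPt {S : Set X} {g : G} (hg : g ∈ fixPt G X S) {y : FinSupp X H}
    (hy : mulSupport (y : X → H) ⊆ S) : g • y = y :=
  smul_eq_self_iff.2 fun x hx => by rw [hg x (hy hx)]

lemma fixPt_le_fixPt_of_tildeSet_subset {S : Set X} {A : Set (FinSupp X H)}
    (hS : tildeSet X H A ⊆ S) : fixPt G X S ≤ fixPt G (FinSupp X H) A :=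
  fun _ hg _ hy => smul_eq_self_of_mem_fixPt hg fun _ hx => hS (Set.mem_biUnion hy hx)

lemma isClosed_stabilizer [TopologicalSpace G] [IsTopologicalGroup G]
    (hstab : ∀ x : X, IsClosed (stabilizer G x : Set G)) (y : FinSupp X H) :
    IsClosed (stabilizer G y : Set G) := by
  have : (stabilizer G y : Set G) = ⋂ x ∈ mulSupport (y : X → H),
      ⋃ w ∈ mulSupport (y : X → H) ∩ (y : X → H) ⁻¹' {(y : X → H) x}, {g : G | g • x = w} := by
    ext g
    simp only [SetLike.mem_coe, mem_stabilizer_iff, smul_eq_self_iff, Set.mem_iInter,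
      Set.mem_iUnion, Set.mem_ofPred_eq, exists_prop]
    refine forall₂_congr fun x hx => ⟨fun h => ⟨g • x, ⟨?_, h⟩, rfl⟩, ?_⟩
    · simpa [mem_mulSupport, h] using hx
    · rintro ⟨_, ⟨_, h⟩, rfl⟩
      exact h
  exact this ▸ isClosed_biInter fun x _ => ((y.2.subset Set.inter_subset_left).isClosed_biUnion
    fun w _ => isClosed_setOf_smul_eq (hstab x) w)

variable [DecidableEq X]

def mulSingle (x : X) (h : H) : FinSupp X H :=
  ⟨Pi.mulSingle x h, (Set.finite_singleton x).subset Pi.mulSupport_mulSingle_subset⟩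

lemma smul_mulSingle (g : G) (x : X) (h : H) :
    g • (mulSingle x h : FinSupp X H) = mulSingle (g • x) h := by
  ext z
  simp only [smul_finSupp_apply, mulSingle, Pi.mulSingle_apply, inv_smul_eq_iff]

lemma smul_mulSingle_eq_self_iff {g : G} {x : X} {h : H} (hh : h ≠ 1) :
    g • (mulSingle x h : FinSupp X H) = mulSingle x h ↔ g • x = x := by
  refine ⟨fun hg => ?_, fun hg => by rw [smul_mulSingle, hg]⟩
  by_contra hne
  have := congrArg (fun y : FinSupp X H => (y : X → H) (g • x)) (smul_mulSingle g x h ▸ hg)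
  simp [mulSingle, hne, hh] at this

end FinSupp

section NMIndep

open MulAction TopologicalSpace

variable {X H G} [DecidableEq X] [TopologicalSpace G] [IsTopologicalGroup G]

lemma not_nmIndep1_empty_of_mulSingle_mem [SecondCountableTopology G]
    (hstab : ∀ x : X, IsClosed {g : G | g • x = x}) {x : X} (hx : ¬ (orbit G x).Countable)
    {h : H} (hh : h ≠ 1) {B : Set (FinSupp X H)} (hB : FinSupp.mulSingle x h ∈ B)
    {c : FinSupp X H} (hc : (c : X → H) x ≠ 1) : ¬ NMIndep1 G (FinSupp X H) c ∅ B := by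
  set K := fixPt G (FinSupp X H) ∅
  have : SeparableSpace K := inferInstanceAs (SeparableSpace (K : Set G))
  have hxK : ¬ (orbit K x).Countable := fun hK => hx (hK.mono
    (show orbit G x ⊆ orbit K x from fun _ ⟨g, hg⟩ => ⟨⟨g, fun _ h => h.elim⟩, hg⟩))
  have hF : ((c : X → H) ⁻¹' {(c : X → H) x}).Countable :=
    (c.2.subset fun z (hz : (c : X → H) z = (c : X → H) x) => by
      rwa [mem_mulSupport, hz]).countable
  have hmeagre := (isMeagre_setOf_smul_mem (isClosed_stabilizer_subgroup (hstab x) K) hxK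
    hF).preimage_of_isOpenMap continuous_inv (Homeomorph.inv K).isOpenMap
  unfold NMIndep1 NMIndep
  refine not_not.2 (hmeagre.mono ?_)
  rintro g ⟨j, hj, hjc⟩
  have hjx : j⁻¹ • x = x := inv_smul_eq_iff.2
    ((FinSupp.smul_mulSingle_eq_self_iff hh).1 (hj _ (Or.inr hB))).symm
  have := congrArg (fun y : FinSupp X H => (y : X → H) x) (congrFun hjc 0)
  simp only [smul_finSupp_apply, hjx] at this
  exact this.symm

lemma nmIndep1_mulSingle_of_not_isMeagre {A : Set (FinSupp X H)} {a : FinSupp X H}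
    {L : Subgroup G} (hLA : L ≤ fixPt G (FinSupp X H) A) (hLa : ∀ l ∈ L, l • a = a) {x : X}
    (hx : ¬ IsMeagre {k : fixPt G (FinSupp X H) A | ∃ l ∈ L, l • (k : G) • x = x}) (h : H) :
    NMIndep1 G (FinSupp X H) a A {FinSupp.mulSingle x h} := by
  set K := fixPt G (FinSupp X H) A
  refine fun hI => hx ((hI.preimage_of_isOpenMap continuous_inv
    (Homeomorph.inv K).isOpenMap).mono ?_)
  rintro k ⟨l, hl, hlk⟩
  have hlx : l⁻¹ • x = (k : G) • x := inv_smul_eq_iff.2 hlk.symm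
  refine ⟨(k : G)⁻¹ * l⁻¹, ?_, funext fun _ => ?_⟩
  · rintro y (hy | rfl)
    · exact K.mul_mem (K.inv_mem k.2) (K.inv_mem (hLA hl)) y hy
    · rw [FinSupp.smul_mulSingle, mul_smul, hlx, inv_smul_smul]
  · rw [mul_smul, inv_smul_eq_iff.2 (hLa l hl).symm]
    rfl

end NMIndep

section Existence

open MulAction

variable {X H G}

lemma exists_mem_fixPt_smul_eq_of_mk_cons_eq {m : ℕ} {t : Fin m → X} {u v : X}
    (h : Quotient.mk (orbitRel G (Fin (m + 1) → X)) (Fin.cons u t) =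
      Quotient.mk (orbitRel G (Fin (m + 1) → X)) (Fin.cons v t)) :
    ∃ g ∈ fixPt G X (Set.range t), g • u = v := by
  obtain ⟨g, hg⟩ := Quotient.exact h.symm
  refine ⟨g, ?_, by simpa using congrFun hg 0⟩
  rintro _ ⟨i, rfl⟩
  simpa using congrFun hg i.succ

variable [DecidableEq X] [TopologicalSpace G] [IsTopologicalGroup G] [PolishSpace G]

lemma exists_nmIndep1_mulSingle (hstab : ∀ x : X, IsClosed {g : G | g • x = x})
    (hsmall : ∀ n : ℕ, Countable (Quotient (orbitRel G (Fin n → X)))) [Uncountable X]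
    (a : FinSupp X H) {A : Set (FinSupp X H)} (hA : A.Finite) :
    ∃ x : X, ¬ (orbit G x).Countable ∧ (a : X → H) x = 1 ∧
      ∀ h : H, NMIndep1 G (FinSupp X H) a A {FinSupp.mulSingle x h} := by
  obtain ⟨m, t, -, ht⟩ := ((hA.biUnion fun y _ => y.2).union a.2).fin_param
  set K := fixPt G (FinSupp X H) A
  set L := fixPt G X (Set.range t)
  have hLK : L ≤ K := FinSupp.fixPt_le_fixPt_of_tildeSet_subset (ht ▸ Set.subset_union_left)
  have hLa : ∀ l ∈ L, l • a = a := fun _ hl =>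
    FinSupp.smul_eq_self_of_mem_fixPt hl (ht ▸ Set.subset_union_right)
  have : PolishSpace K :=
    (isClosed_fixPt_s5 (FinSupp.isClosed_stabilizer hstab) A).polishSpace
  have := hsmall (m + 1)
  let f : X → Quotient (orbitRel G (Fin (m + 1) → X)) := fun z => Quotient.mk _ (Fin.cons z t)
  obtain ⟨q, hq⟩ := Cardinal.exists_uncountable_fiber f
    (Cardinal.mk_le_aleph0.trans_lt (Cardinal.aleph0_lt_mk_iff.2 ‹_›))
  obtain ⟨x, hx⟩ : Nonempty (f ⁻¹' {q}) := inferInstance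
  have hxL : ¬ (orbit L x).Countable := fun hc => hq.not_countable <| Set.countable_coe_iff.2 <|
    hc.mono fun z hz => by
      obtain ⟨l, hl, rfl⟩ := exists_mem_fixPt_smul_eq_of_mk_cons_eq (hx.trans hz.symm)
      exact ⟨⟨l, hl⟩, rfl⟩
  have hxK : ¬ (orbit K x).Countable := fun hc => hxL <| hc.mono <| by
    rintro _ ⟨l, rfl⟩
    exact ⟨⟨l, hLK l.2⟩, rfl⟩
  have hM : IsMeagre {k : K | k • x ∈ mulSupport (a : X → H)} :=
    isMeagre_setOf_smul_mem (isClosed_stabilizer_subgroup (hstab x) K) hxK a.2.countable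
  obtain ⟨g, hga, hg⟩ := exists_not_isMeagre_setOf_apply_smul_eq f x hM
  refine ⟨(g : G) • x, ?_, notMem_mulSupport.1 hga, nmIndep1_mulSingle_of_not_isMeagre hLK hLa
    fun hm => hg (hm.mono fun _ hk => exists_mem_fixPt_smul_eq_of_mk_cons_eq hk)⟩
  rw [orbit_smul]
  exact fun hc => hxL (hc.mono (orbit_subgroup_subset L x))

end Existence

theorem statement5 [TopologicalSpace G] [IsTopologicalGroup G] [PolishSpace G]
    (hstab : ∀ x : X, IsClosed {g : G | g • x = x})
    (hsmall : ∀ n : ℕ, Countable (Quotient (MulAction.orbitRel G (Fin n → X))))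
    [Uncountable X] [Nontrivial H]
    (a : ↥(FinSupp X H)) (A : Finset ↥(FinSupp X H)) :
    ¬ (∀ b : ↥(FinSupp X H),
        NMIndep1 G ↥(FinSupp X H) a (A : Set ↥(FinSupp X H)) {b} →
        NMIndep1 G ↥(FinSupp X H) (b * a) ∅ ((A : Set ↥(FinSupp X H)) ∪ {b})) ∧
    ¬ (∀ b : ↥(FinSupp X H),
        NMIndep1 G ↥(FinSupp X H) a (A : Set ↥(FinSupp X H)) {b} →
        NMIndep1 G ↥(FinSupp X H) (a * b) ∅ ((A : Set ↥(FinSupp X H)) ∪ {b})) := by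
  classical
  obtain ⟨h, hh⟩ := exists_ne (1 : H)
  obtain ⟨x, hx, hax, hindep⟩ := exists_nmIndep1_mulSingle hstab hsmall a A.finite_toSet
  have hdep (c : FinSupp X H) (hc : (c : X → H) x ≠ 1) :
      ¬ NMIndep1 G (FinSupp X H) c ∅ ((A : Set (FinSupp X H)) ∪ {FinSupp.mulSingle x h}) :=
    not_nmIndep1_empty_of_mulSingle_mem hstab hx hh
      (Set.mem_union_right _ (Set.mem_singleton _)) hc
  refine ⟨fun hgen => hdep _ ?_ (hgen _ (hindep h)), fun hgen => hdep _ ?_ (hgen _ (hindep h))⟩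
  all_goals simpa [FinSupp.mulSingle, hax] using hh
end

section
/- Let X be an uncountable set and H a group. If A is a subgroup of countable index in the direct sum ⊕_{x∈X} H (i.e., the set of left cosets of A is countable), then there exists x ∈ X such that the coordinate projection π_x : ⊕_{x∈X} H → H maps A onto H. -/
open Function

variable (X H : Type*)

/-- Let `X` be an uncountable set and `H` a group. If `A` is a subgroup of
countable index in the direct sum `⊕_{x ∈ X} H` (i.e. the set of left cosets of `A` is
countable), then there is `x ∈ X` such that the coordinate projection `π_x` maps `A` onto
`H`. -/
theorem statement7 [Uncountable X] [Group H]
    (A : Subgroup ↥(FinSupp X H)) (hA : Countable (↥(FinSupp X H) ⧸ A)) :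
    ∃ x : X, ∀ h : H, ∃ f : ↥(FinSupp X H), f ∈ A ∧ (f : X → H) x = h := by
  classical
  by_contra hcon
  push_neg at hcon
  choose h hh using hcon
  set e : X → ↥(FinSupp X H) := fun x =>
    ⟨Pi.mulSingle x (h x),
      (Set.finite_singleton x).subset Pi.mulSupport_mulSingle_subset⟩ with he
  have hinj : Function.Injective (fun x => QuotientGroup.mk (s := A) (e x)) := by
    intro x y hxy
    by_contra hne
    rw [QuotientGroup.eq] at hxy
    apply hh x (((e x)⁻¹ * e y)⁻¹) (A.inv_mem hxy)
    show (((Pi.mulSingle x (h x) : X → H)⁻¹ * Pi.mulSingle y (h y))⁻¹ : X → H) x = h x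
    simp [Pi.mulSingle_eq_of_ne hne]
  exact not_countable hinj.countable
end

section
/- Let X be an uncountable set and H a group that is not solvable. Then every subgroup of countable index in the direct sum ⊕_{x∈X} H is not solvable. In particular, ⊕_{x∈X} H is not solvable-by-countable: it has no solvable subgroup of countable index. -/
/-!
Suppose `A ≤ ⊕_{x ∈ X} H` has countable index and derived length at most `m`, and let
`S ⊆ H` be finite. There are only countably many maps from `S` to the cosets of `A` but
uncountably many `x`, so two distinct coordinates `x ≠ y` satisfy
`single x s ≡ single y s mod A` for all `s ∈ S`. Then `(single x s)⁻¹ * single y s ∈ A`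
evaluates to `s` at `y`, so `⟨S⟩` lies in the image of `A` under evaluation at `y` and has
derived length at most `m`. As every element of the `m`-th derived subgroup of `H` already
lies in that of a finitely generated subgroup, `H` is solvable.
-/

open Function

variable (X H : Type*)

section DerivedSeries

variable {G G' : Type*} [Group G] [Group G']

theorem derivedSeries_eq_bot_of_injective {f : G →* G'} (hf : Injective f) {n : ℕ}
    (h : derivedSeries G' n = ⊥) : derivedSeries G n = ⊥ := by
  rw [← Subgroup.map_eq_bot_iff_of_injective _ hf, ← le_bot_iff, ← h]
  exact map_derivedSeries_le_derivedSeries f n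

theorem derivedSeries_eq_bot_of_surjective {f : G →* G'} (hf : Surjective f) {n : ℕ}
    (h : derivedSeries G n = ⊥) : derivedSeries G' n = ⊥ := by
  rw [← map_derivedSeries_eq hf, h, Subgroup.map_bot]

theorem Subgroup.derivedSeries_eq_bot_of_le {K L : Subgroup G} (hKL : K ≤ L) {n : ℕ}
    (h : derivedSeries L n = ⊥) : derivedSeries K n = ⊥ :=
  derivedSeries_eq_bot_of_injective (Subgroup.inclusion_injective hKL) h

theorem Subgroup.derivedSeries_map_eq_bot (f : G →* G') {K : Subgroup G} {n : ℕ}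
    (h : derivedSeries K n = ⊥) : derivedSeries (K.map f) n = ⊥ :=
  derivedSeries_eq_bot_of_surjective (f.subgroupMap_surjective K) h

theorem Subgroup.monotone_map_subtype_derivedSeries (n : ℕ) :
    Monotone fun K : Subgroup G => (derivedSeries K n).map K.subtype := by
  intro K L hKL
  dsimp only
  rw [← Subgroup.subtype_comp_inclusion hKL, ← Subgroup.map_map]
  exact Subgroup.map_mono (map_derivedSeries_le_derivedSeries _ n)

theorem directed_map_subtype_derivedSeries_closure_finset (n : ℕ) :
    Directed (· ≤ ·) fun S : Finset G =>
      (derivedSeries (Subgroup.closure (S : Set G)) n).map (Subgroup.closure (S : Set G)).subtype :=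
  ((Subgroup.monotone_map_subtype_derivedSeries n).comp
    fun _ _ hST => Subgroup.closure_mono (Finset.coe_subset.2 hST)).directed_le

theorem derivedSeries_le_iSup_closure_finset (n : ℕ) :
    derivedSeries G n ≤ ⨆ S : Finset G,
      (derivedSeries (Subgroup.closure (S : Set G)) n).map (Subgroup.closure (S : Set G)).subtype := by
  classical
  have hdir := directed_map_subtype_derivedSeries_closure_finset (G := G)
  have hmono := Subgroup.monotone_map_subtype_derivedSeries (G := G)
  induction n with
  | zero =>
    intro g _
    refine (Subgroup.mem_iSup_of_directed (hdir 0)).2 ⟨{g}, ⟨g, ?_⟩, Subgroup.mem_top _, rfl⟩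
    exact Subgroup.subset_closure (by simp)
  | succ n ih =>
    rw [derivedSeries_succ, Subgroup.commutator_le]
    intro g₁ hg₁ g₂ hg₂
    obtain ⟨S, hS⟩ := (Subgroup.mem_iSup_of_directed (hdir n)).1 (ih hg₁)
    obtain ⟨T, hT⟩ := (Subgroup.mem_iSup_of_directed (hdir n)).1 (ih hg₂)
    refine (Subgroup.mem_iSup_of_directed (hdir (n + 1))).2 ⟨S ∪ T, ?_⟩
    have hsub : ∀ {U : Finset G}, U ⊆ S ∪ T →
        Subgroup.closure (U : Set G) ≤ Subgroup.closure ((S ∪ T : Finset G) : Set G) :=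
      fun hU => Subgroup.closure_mono (Finset.coe_subset.2 hU)
    obtain ⟨a, ha, rfl⟩ := hmono n (hsub Finset.subset_union_left) hS
    obtain ⟨b, hb, rfl⟩ := hmono n (hsub Finset.subset_union_right) hT
    exact ⟨a * b * a⁻¹ * b⁻¹, Subgroup.commutator_mem_commutator ha hb, rfl⟩

theorem derivedSeries_eq_bot_of_forall_finset {n : ℕ}
    (h : ∀ S : Finset G, derivedSeries (Subgroup.closure (S : Set G)) n = ⊥) :
    derivedSeries G n = ⊥ :=
  le_bot_iff.1 <| (derivedSeries_le_iSup_closure_finset n).trans (by simp [h])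

end DerivedSeries

namespace FinSupp

variable {X H} [Group H]

def single [DecidableEq X] (x : X) (h : H) : FinSupp X H :=
  ⟨Pi.mulSingle x h, (Set.finite_singleton x).subset Pi.mulSupport_mulSingle_subset⟩

def eval (y : X) : FinSupp X H →* H :=
  (Pi.evalMonoidHom (fun _ : X => H) y).comp (FinSupp X H).subtype

@[simp]
theorem eval_single_self [DecidableEq X] (y : X) (h : H) : eval y (single y h) = h :=
  Pi.mulSingle_eq_same (M := fun _ : X => H) y h

theorem eval_single_of_ne [DecidableEq X] {x y : X} (hxy : x ≠ y) (h : H) :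
    eval y (single x h) = 1 :=
  Pi.mulSingle_eq_of_ne (M := fun _ : X => H) hxy.symm h

theorem exists_subset_map_eval [Uncountable X] (A : Subgroup (FinSupp X H))
    [Countable (FinSupp X H ⧸ A)] (S : Finset H) : ∃ y : X, (S : Set H) ⊆ A.map (eval y) := by
  classical
  obtain ⟨x, y, hcoset, hxy⟩ : ∃ x y : X,
      (∀ s : S, (single x (s : H) : FinSupp X H ⧸ A) = single y (s : H)) ∧ x ≠ y := by
    simpa [Injective, funext_iff] using not_injective_uncountable_countable
      fun (x : X) (s : S) => (single x (s : H) : FinSupp X H ⧸ A)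
  refine ⟨y, fun s hs => ⟨(single x s)⁻¹ * single y s, QuotientGroup.eq.1 (hcoset ⟨s, hs⟩), ?_⟩⟩
  simp [eval_single_of_ne hxy]

theorem isSolvable_of_countable_quotient [Uncountable X] (A : Subgroup (FinSupp X H))
    [Countable (FinSupp X H ⧸ A)] [hA : Group.IsSolvable A] : Group.IsSolvable H := by
  obtain ⟨m, hm⟩ := hA
  refine ⟨m, derivedSeries_eq_bot_of_forall_finset fun S => ?_⟩
  obtain ⟨y, hy⟩ := exists_subset_map_eval A S
  exact Subgroup.derivedSeries_eq_bot_of_le ((Subgroup.closure_le _).2 hy)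
    (Subgroup.derivedSeries_map_eq_bot (eval y) hm)

end FinSupp

/-- Let `X` be an uncountable set and `H` a group that is not solvable.
Then every subgroup of countable index in `⊕_{x ∈ X} H` is not solvable; in particular
`⊕_{x ∈ X} H` is not solvable-by-countable: it has no solvable subgroup of countable
index. -/
theorem statement8 [Uncountable X] [Group H] (hH : ¬ IsSolvable H) :
    (∀ A : Subgroup ↥(FinSupp X H), Countable (↥(FinSupp X H) ⧸ A) → ¬ IsSolvable ↥A) ∧
    ¬ ∃ A : Subgroup ↥(FinSupp X H), Countable (↥(FinSupp X H) ⧸ A) ∧ IsSolvable ↥A := by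
  have key : ∀ A : Subgroup (FinSupp X H), Countable (FinSupp X H ⧸ A) → ¬ Group.IsSolvable A :=
    fun A _ hA => hH (FinSupp.isSolvable_of_countable_quotient A (hA := hA))
  exact ⟨key, fun ⟨A, hA, hsolv⟩ => key A hA hsolv⟩
end

section
/- Let (X,G) be a small Polish structure and R a countable nontrivial commutative ring. Let G act on the polynomial ring R(X) = R[(y_x)_{x∈X}] (the ring of multivariate polynomials over R in variables indexed by X) by renaming variables: g·w(y_{x₁},…,y_{xₙ}) = w(y_{g x₁},…,y_{g xₙ}). Then (R(X),G) is a small Polish structure: G acts faithfully on R(X), the stabilizer of every polynomial is a closed subgroup of G, and for every n < ω there are only countably many orbits on R(X)ⁿ under the diagonal action of G. -/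
/-!
Faithfulness is seen on the variables `y_x` themselves. An element `g` fixing `w` permutes the
finite set `vars w`, and whether `g` fixes `w` depends only on the restriction of `g` to
`vars w`; so the stabilizer of `w` is a finite union of sets `{g | ∀ x ∈ vars w, g • x = f x}`, each
closed, being an intersection of cosets of point stabilizers. Finally, every `n`-tuple of
polynomials arises from a tuple of polynomials in `m` variables by renaming them along an
`m`-tuple of points of `X`, equivariantly in that tuple; there are countably many polynomial
tuples in finitely many variables and countably many orbits of `m`-tuples of `X`, hence
countably many orbits of `n`-tuples of polynomials.
-/

open MulAction

namespace MulAction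

variable {G X : Type*} [Group G] [MulAction G X]

theorem isClosed_setOf_smul_eq [TopologicalSpace G] [ContinuousMul G] {x : X}
    (hx : IsClosed {g : G | g • x = x}) (y : X) : IsClosed {g : G | g • x = y} := by
  by_cases hy : ∃ h : G, h • x = y
  · obtain ⟨h, rfl⟩ := hy
    have hcoset : {g : G | g • x = h • x} = (h⁻¹ * ·) ⁻¹' {g | g • x = x} := by
      ext g
      simp [mul_smul, inv_smul_eq_iff]
    exact hcoset ▸ hx.preimage (continuous_const_mul _)
  · convert isClosed_empty
    exact Set.eq_empty_of_forall_notMem fun g hg => hy ⟨g, hg⟩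

theorem countable_range_orbit_of_forall_exists_eq {J : Type*} [Countable J] {Y : J → Type*}
    [∀ j, MulAction G (Y j)] [∀ j, Countable (Quotient (orbitRel G (Y j)))]
    (f : ∀ j, Y j →[G] X) (hf : ∀ x, ∃ j y, f j y = x) :
    (Set.range (orbit G : X → Set X)).Countable := by
  refine (Set.countable_range fun q : Σ j, Quotient (orbitRel G (Y j)) =>
    orbit G (f q.1 q.2.out)).mono ?_
  rintro _ ⟨x, rfl⟩
  obtain ⟨j, y, rfl⟩ := hf x
  obtain ⟨g, hg⟩ : ∃ g : G, g • y = (⟦y⟧ : Quotient (orbitRel G (Y j))).out :=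
    Quotient.mk_out (s := orbitRel G (Y j)) y
  exact ⟨⟨j, ⟦y⟧⟩, by simp only [← hg, map_smul, orbit_smul]⟩

end MulAction

namespace MvPolynomial

variable {σ τ R : Type*} [CommSemiring R]

instance [Countable σ] [Countable R] : Countable (MvPolynomial σ R) :=
  (AddMonoidAlgebra.coeffEquiv (R := R) (M := σ →₀ ℕ)).injective.countable

theorem rename_congr_vars {f₁ f₂ : σ → τ} {p : MvPolynomial σ R}
    (h : ∀ i ∈ p.vars, f₁ i = f₂ i) : rename f₁ p = rename f₂ p :=
  hom_congr_vars (f₁ := (rename f₁).toRingHom) (f₂ := (rename f₂).toRingHom)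
    (by ext; simp) (fun i hi _ => by simp [h i hi]) rfl

theorem exists_rename_fin_eq {ι : Type*} [Finite ι] (v : ι → MvPolynomial σ R) :
    ∃ (m : ℕ) (f : Fin m → σ) (p : ι → MvPolynomial (Fin m) R), ∀ i, rename f (p i) = v i := by
  classical
  have := Fintype.ofFinite ι
  let s : Finset σ := Finset.univ.biUnion fun i => (v i).vars
  let f : Fin s.card → σ := fun k => s.equivFin.symm k
  have hf : Function.Injective f := Subtype.val_injective.comp s.equivFin.symm.injective
  have hvars : ∀ i, ↑(v i).vars ⊆ Set.range f := fun i x hx =>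
    ⟨s.equivFin ⟨x, Finset.mem_biUnion.2 ⟨i, Finset.mem_univ i, hx⟩⟩, by simp [f]⟩
  choose p hp using fun i => exists_rename_eq_of_vars_subset_range (v i) f hf (hvars i)
  exact ⟨s.card, f, p, hp⟩

variable (G : Type*) [Group G] [MulAction G σ]

noncomputable abbrev renameMulAction : MulAction G (MvPolynomial σ R) where
  smul g p := rename (g • ·) p
  one_smul p := by
    change rename (fun x => (1 : G) • x) p = p
    simp only [one_smul]
    exact rename_id_apply p
  mul_smul g h p := by
    change rename (fun x => (g * h) • x) p = rename (g • ·) (rename (h • ·) p)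
    simp [rename_rename, Function.comp_def, mul_smul]

end MvPolynomial

attribute [local instance] MvPolynomial.renameMulAction

namespace MvPolynomial

variable {G σ τ R : Type*} [CommSemiring R] [Group G] [MulAction G σ]

theorem smul_eq_rename (g : G) (p : MvPolynomial σ R) : g • p = rename (g • ·) p := rfl

instance [FaithfulSMul G σ] [Nontrivial R] : FaithfulSMul G (MvPolynomial σ R) :=
  ⟨fun h => eq_of_smul_eq_smul fun x =>
    X_injective (R := R) (by simpa [smul_eq_rename] using h (X x))⟩

theorem mapsTo_smul_vars_of_smul_eq_self {g : G} {w : MvPolynomial σ R} (hw : g • w = w) :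
    Set.MapsTo (g • ·) (w.vars : Set σ) w.vars := by
  intro y hy
  have hw' : rename (g⁻¹ • ·) w = w := by rw [← smul_eq_rename, inv_smul_eq_iff, hw]
  obtain ⟨x, hx, rfl⟩ := mem_vars_rename _ w (hw'.symm ▸ hy : y ∈ (rename (g⁻¹ • ·) w).vars)
  simpa using hx

theorem isClosed_setOf_smul_eq_self [TopologicalSpace G] [ContinuousMul G]
    (hstab : ∀ x : σ, IsClosed {g : G | g • x = x}) (w : MvPolynomial σ R) :
    IsClosed {g : G | g • w = w} := by
  set S := {g : G | g • w = w}
  let φ : G → w.vars → σ := fun g x => g • (x : σ)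
  have hsat : S = φ ⁻¹' (φ '' S) := by
    refine (Set.subset_preimage_image φ S).antisymm ?_
    rintro g ⟨g', hg', hφ⟩
    rw [Set.mem_ofPred_eq, smul_eq_rename, rename_congr_vars (f₂ := (g' • ·)),
      ← smul_eq_rename, hg']
    exact fun x hx => (congrFun hφ ⟨x, hx⟩).symm
  have hfin : (φ '' S).Finite := by
    refine (Set.finite_range fun f : w.vars → w.vars => Subtype.val ∘ f).subset ?_
    rintro _ ⟨g, hg, rfl⟩
    exact ⟨fun x => ⟨g • (x : σ), mapsTo_smul_vars_of_smul_eq_self hg x.2⟩, rfl⟩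
  have hfiber : ∀ f, IsClosed (φ ⁻¹' {f}) := fun f => by
    have : φ ⁻¹' {f} = ⋂ x : w.vars, {g | g • (x : σ) = f x} := by
      ext g
      simp only [Set.mem_preimage, Set.mem_singleton_iff, Set.mem_iInter, Set.mem_ofPred_eq]
      exact _root_.funext_iff
    exact this ▸ isClosed_iInter fun x => isClosed_setOf_smul_eq (hstab x) (f x)
  rw [hsat, ← Set.biUnion_preimage_singleton]
  exact hfin.isClosed_biUnion fun f _ => hfiber f

noncomputable def renameMulActionHom {ι : Type*} (p : ι → MvPolynomial τ R) :
    (τ → σ) →[G] (ι → MvPolynomial σ R) where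
  toFun f i := rename f (p i)
  map_smul' g f := by
    funext i
    simp [smul_eq_rename, rename_rename, Function.comp_def, Pi.smul_def]

theorem countable_range_orbit_pi [Countable R] {ι : Type*} [Finite ι]
    (hsmall : ∀ m, Countable (Quotient (orbitRel G (Fin m → σ)))) :
    (Set.range (orbit G : (ι → MvPolynomial σ R) → Set (ι → MvPolynomial σ R))).Countable := by
  refine countable_range_orbit_of_forall_exists_eq
    (J := Σ m, ι → MvPolynomial (Fin m) R) (fun j => renameMulActionHom j.2) fun v => ?_
  obtain ⟨m, f, p, hp⟩ := exists_rename_fin_eq v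
  exact ⟨⟨m, p⟩, f, _root_.funext hp⟩

end MvPolynomial

open MvPolynomial

theorem statement9_general {G X R : Type*} [Group G] [TopologicalSpace G] [IsTopologicalGroup G]
    [MulAction G X] [FaithfulSMul G X]
    (hstab : ∀ x : X, IsClosed {g : G | g • x = x})
    (hsmall : ∀ n : ℕ, Countable (Quotient (MulAction.orbitRel G (Fin n → X))))
    [CommRing R] [Countable R] [Nontrivial R] :
    (∀ g₁ g₂ : G,
        (∀ w : MvPolynomial X R,
          MvPolynomial.rename (g₁ • ·) w = MvPolynomial.rename (g₂ • ·) w) → g₁ = g₂) ∧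
    (∀ w : MvPolynomial X R, IsClosed {g : G | MvPolynomial.rename (g • ·) w = w}) ∧
    (∀ n : ℕ,
      Countable {o : Set (Fin n → MvPolynomial X R) | ∃ v : Fin n → MvPolynomial X R,
        o = {w | ∃ g : G, (fun i => MvPolynomial.rename (g • ·) (v i)) = w}}) := by
  refine ⟨fun g₁ g₂ h => eq_of_smul_eq_smul (α := MvPolynomial X R) h,
    isClosed_setOf_smul_eq_self hstab, fun n => ?_⟩
  refine ((countable_range_orbit_pi (R := R) (ι := Fin n) hsmall).mono ?_).to_subtype
  rintro _ ⟨v, rfl⟩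
  exact ⟨v, rfl⟩

/-- Let `(X,G)` be a small Polish structure and `R` a countable nontrivial
commutative ring. Let `G` act on the polynomial ring `R(X) = R[(y_x)_{x ∈ X}]` by renaming
variables: `g • w = w(y_{g x₁}, …, y_{g xₙ})`, i.e. `g • w = MvPolynomial.rename (g • ·) w`.
Then `(R(X),G)` is a small Polish structure: `G` acts faithfully on `R(X)`, the stabilizer
of every polynomial is closed in `G`, and for every `n < ω` the set of orbits on `R(X)ⁿ`
under the diagonal action of `G` is countable. -/
theorem statement9 {G X R : Type*} [Group G] [TopologicalSpace G] [IsTopologicalGroup G]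
    [PolishSpace G] [MulAction G X] [FaithfulSMul G X]
    (hstab : ∀ x : X, IsClosed {g : G | g • x = x})
    (hsmall : ∀ n : ℕ, Countable (Quotient (MulAction.orbitRel G (Fin n → X))))
    [CommRing R] [Countable R] [Nontrivial R] :
    (∀ g₁ g₂ : G,
        (∀ w : MvPolynomial X R,
          MvPolynomial.rename (g₁ • ·) w = MvPolynomial.rename (g₂ • ·) w) → g₁ = g₂) ∧
    (∀ w : MvPolynomial X R, IsClosed {g : G | MvPolynomial.rename (g • ·) w = w}) ∧
    (∀ n : ℕ,
      Countable {o : Set (Fin n → MvPolynomial X R) | ∃ v : Fin n → MvPolynomial X R,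
        o = {w | ∃ g : G, (fun i => MvPolynomial.rename (g • ·) (v i)) = w}}) :=
  statement9_general hstab hsmall
end

section
/- The set H = {z : ℕ×ℕ → ZMod 2 : ‖z‖ < ∞} is a subgroup of the product group (ZMod 2)^{ℕ×ℕ} (with pointwise addition mod 2), and, equipped with the metric d_H, H is a Polish group: d_H is a complete, separable metric on H, and addition on H is continuous with respect to d_H. -/
open scoped ENNReal

/-- The weight of a point `(i,j) ∈ ℕ × ℕ`: `2 · 3^{-(i+1)}`. -/
noncomputable def wt (p : ℕ × ℕ) : ℝ≥0∞ := 2 * ((3 : ℝ≥0∞) ^ (p.1 + 1))⁻¹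

/-- `‖S‖ = Σ_{(i,j) ∈ S} 2 · 3^{-(i+1)} ∈ [0,∞]` for `S ⊆ ℕ × ℕ`. -/
noncomputable def nrmS (S : Set (ℕ × ℕ)) : ℝ≥0∞ := ∑' p, S.indicator wt p

lemma nrmS_mono {S T : Set (ℕ × ℕ)} (h : S ⊆ T) : nrmS S ≤ nrmS T :=
  ENNReal.tsum_le_tsum fun p =>
    Set.indicator_le_indicator_of_subset h (fun _ => zero_le) p

lemma nrmS_union_le (S T : Set (ℕ × ℕ)) : nrmS (S ∪ T) ≤ nrmS S + nrmS T := by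
  rw [nrmS, nrmS, nrmS, ← ENNReal.tsum_add]
  refine ENNReal.tsum_le_tsum fun p => ?_
  by_cases hS : p ∈ S
  · refine le_trans ?_ (le_add_right le_rfl)
    rw [Set.indicator_of_mem (Set.mem_union_left _ hS), Set.indicator_of_mem hS]
  · by_cases hT : p ∈ T
    · refine le_trans ?_ (le_add_left le_rfl)
      rw [Set.indicator_of_mem (Set.mem_union_right _ hT), Set.indicator_of_mem hT]
    · rw [Set.indicator_of_notMem (fun hc => hc.elim hS hT)]
      exact zero_le

lemma nrmS_empty : nrmS ∅ = 0 := by simp [nrmS]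

/-- The support of `z : ℕ × ℕ → ZMod 2`. -/
def suppZ (z : ℕ × ℕ → ZMod 2) : Set (ℕ × ℕ) := {p | z p = 1}

/-- `‖z‖` for `z : ℕ × ℕ → ZMod 2`. -/
noncomputable def nrmZ (z : ℕ × ℕ → ZMod 2) : ℝ≥0∞ := nrmS (suppZ z)

/-- `H = {z : ℕ × ℕ → ZMod 2 | ‖z‖ < ∞}`, as an (additive) subgroup of the product group
`ℕ × ℕ → ZMod 2` with pointwise addition mod 2. -/
noncomputable def Hgrp : AddSubgroup ((ℕ × ℕ) → ZMod 2) where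
  carrier := {z | nrmZ z < ⊤}
  zero_mem' := by
    have h : suppZ 0 = ∅ := by ext p; simp [suppZ]
    simp [nrmZ, h, nrmS_empty]
  add_mem' {z w} hz hw := by
    have hsub : suppZ (z + w) ⊆ suppZ z ∪ suppZ w := by
      intro p hp
      by_contra hc
      simp only [Set.mem_union, suppZ, Set.mem_setOf_eq, not_or] at hc
      have hdi : ∀ x : ZMod 2, x = 0 ∨ x = 1 := by decide
      have hz0 : z p = 0 := (hdi (z p)).resolve_right hc.1
      have hw0 : w p = 0 := (hdi (w p)).resolve_right hc.2
      have hp' : (z + w) p = 1 := hp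
      rw [Pi.add_apply, hz0, hw0] at hp'
      exact absurd hp' (by decide)
    calc nrmZ (z + w) ≤ nrmS (suppZ z ∪ suppZ w) := nrmS_mono hsub
      _ ≤ nrmZ z + nrmZ w := nrmS_union_le _ _
      _ < ⊤ := ENNReal.add_lt_top.2 ⟨hz, hw⟩
  neg_mem' {z} hz := by
    have h : suppZ (-z) = suppZ z := by
      ext p; simp [suppZ, CharTwo.neg_eq]
    simpa [nrmZ, h] using hz
/-- `φ(x) = Σ_i 2 · x i · 3^{-(i+1)}`, the standard map from `2^ℕ` onto the ternary Cantor
set (values of `x` read as `0, 1` in `ℝ`). -/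
noncomputable def phiC (x : ℕ → ZMod 2) : ℝ :=
  ∑' i, 2 * ((x i).val : ℝ) * ((3 : ℝ) ^ (i + 1))⁻¹

/-- The metric on `H`: `d_H(z,w) = Σ_j |φ(z(·,j)) − φ(w(·,j))|`, the `ℓ¹`-distance between
the corresponding points of `C^ℕ ∩ ℓ¹`. -/
noncomputable def dH (z w : ↥Hgrp) : ℝ :=
  ∑' j, |phiC (fun i => (z : (ℕ × ℕ) → ZMod 2) (i, j)) -
          phiC (fun i => (w : (ℕ × ℕ) → ZMod 2) (i, j))|

/-- The support of a permutation `g` of `ℕ × ℕ`. -/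
def suppP (g : Equiv.Perm (ℕ × ℕ)) : Set (ℕ × ℕ) := {p | g p ≠ p}

lemma suppP_inv (g : Equiv.Perm (ℕ × ℕ)) : suppP g⁻¹ = suppP g := by
  ext p
  simp only [suppP, Set.mem_setOf_eq, ne_eq]
  constructor
  · intro h hc
    exact h (by conv_lhs => rw [← hc]; simp ; )
  · intro h hc
    exact h (by conv_lhs => rw [← hc]; simp)

/-- `G = {g ∈ Sym(ℕ × ℕ) | ‖supp g‖ < ∞}`, as a subgroup of the symmetric group of
`ℕ × ℕ`. -/
noncomputable def Ggrp : Subgroup (Equiv.Perm (ℕ × ℕ)) where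
  carrier := {g | nrmS (suppP g) < ⊤}
  one_mem' := by
    have h : suppP 1 = ∅ := by ext p; simp [suppP]
    simp [h, nrmS_empty]
  mul_mem' {f g} hf hg := by
    have hsub : suppP (f * g) ⊆ suppP f ∪ suppP g := by
      intro p hp
      by_contra hc
      simp only [Set.mem_union, suppP, Set.mem_setOf_eq, ne_eq, not_or, not_not] at hc
      exact hp (by simp only [suppP, Set.mem_setOf_eq, Equiv.Perm.mul_apply, hc.2, hc.1] at *)
    calc nrmS (suppP (f * g)) ≤ nrmS (suppP f ∪ suppP g) := nrmS_mono hsub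
      _ ≤ nrmS (suppP f) + nrmS (suppP g) := nrmS_union_le _ _
      _ < ⊤ := ENNReal.add_lt_top.2 ⟨hf, hg⟩
  inv_mem' {g} hg := by simpa [suppP_inv] using hg

/-- The metric on `G`: `d(f,g) = ‖supp (f⁻¹ ∘ g)‖`. -/
noncomputable def dG (f g : ↥Ggrp) : ℝ :=
  (nrmS (suppP ((f : Equiv.Perm (ℕ × ℕ))⁻¹ * (g : Equiv.Perm (ℕ × ℕ))))).toReal

/-- The action of `G` on `H`: `g • h = h ∘ g⁻¹`. -/
noncomputable def actGH (g : ↥Ggrp) (h : ↥Hgrp) : ↥Hgrp :=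
  ⟨fun p => (h : (ℕ × ℕ) → ZMod 2) (((g : Equiv.Perm (ℕ × ℕ)))⁻¹ p), by
    have hsub : suppZ (fun p => (h : (ℕ × ℕ) → ZMod 2) (((g : Equiv.Perm (ℕ × ℕ)))⁻¹ p)) ⊆
        suppZ (h : (ℕ × ℕ) → ZMod 2) ∪ suppP (g : Equiv.Perm (ℕ × ℕ)) := by
      intro p hp
      by_cases hgp : ((g : Equiv.Perm (ℕ × ℕ)))⁻¹ p = p
      · left
        have : (h : (ℕ × ℕ) → ZMod 2) (((g : Equiv.Perm (ℕ × ℕ)))⁻¹ p) = 1 := hp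
        rwa [hgp] at this
      · right
        have : p ∈ suppP ((g : Equiv.Perm (ℕ × ℕ)))⁻¹ := hgp
        rwa [suppP_inv] at this
    show nrmZ _ < ⊤
    calc nrmZ _ ≤ nrmS (suppZ (h : (ℕ × ℕ) → ZMod 2) ∪ suppP (g : Equiv.Perm (ℕ × ℕ))) :=
          nrmS_mono hsub
      _ ≤ nrmZ (h : (ℕ × ℕ) → ZMod 2) + nrmS (suppP (g : Equiv.Perm (ℕ × ℕ))) :=
          nrmS_union_le _ _
      _ < ⊤ := ENNReal.add_lt_top.2 ⟨h.2, g.2⟩⟩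

/-!
Column by column, two points of the Cantor set first differ at a ternary digit whose weight is
twice the sum of all later weights, so `|φ x - φ y| ≤ ‖x + y‖ ≤ 3 |φ x - φ y|`. Summing over the
columns, `d_H` is bi-Lipschitz equivalent to the translation-invariant metric `‖z + w‖` on `H`.
For the latter, a Cauchy sequence stabilises pointwise and `‖·‖` is lower semicontinuous along
pointwise stabilisation, which gives completeness; finitely supported elements are dense; and
subadditivity of `‖·‖` makes addition continuous.
-/

open Filter

theorem tsum_abs_le_three_mul_abs_tsum {e : ℕ → ℝ} {a : ℝ} (h0 : |e 0| = 2 * a)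
    (h : ∀ n, |e n| ≤ 2 * a * 3⁻¹ ^ n) : ∑' n, |e n| ≤ 3 * |∑' n, e n| := by
  have hgeom : HasSum (fun n => 2 * a * (3 : ℝ)⁻¹ ^ n) (3 * a) := by
    have := (hasSum_geometric_of_lt_one (r := (3 : ℝ)⁻¹) (by norm_num) (by norm_num)).mul_left
      (2 * a)
    rwa [show 2 * a * (1 - 3⁻¹)⁻¹ = 3 * a by norm_num; ring] at this
  have habs : Summable fun n => |e n| :=
    hgeom.summable.of_nonneg_of_le (fun n => abs_nonneg _) h
  have he : Summable e := habs.of_abs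
  have htail : |∑' n, e (n + 1)| ≤ a :=
    calc |∑' n, e (n + 1)| ≤ ∑' n, |e (n + 1)| :=
          norm_tsum_le_tsum_norm (f := fun n => e (n + 1)) ((summable_nat_add_iff 1).2 habs)
      _ ≤ ∑' n, 3⁻¹ * (2 * a * 3⁻¹ ^ n) :=
          (summable_nat_add_iff 1).2 habs |>.tsum_le_tsum
            (fun n => by simpa [pow_succ, mul_comm, mul_left_comm, mul_assoc] using h (n + 1))
            (hgeom.summable.mul_left _)
      _ = a := by rw [tsum_mul_left, hgeom.tsum_eq]; ring
  calc ∑' n, |e n| ≤ 3 * a := habs.tsum_le_tsum h hgeom.summable |>.trans hgeom.tsum_eq.le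
    _ ≤ 3 * |∑' n, e n| := by
      rw [he.tsum_eq_zero_add]
      have hrev := abs_sub_abs_le_abs_sub (e 0) (-∑' n, e (n + 1))
      rw [abs_neg, sub_neg_eq_add] at hrev
      linarith

theorem tsum_nat_add_eq_tsum {M : Type*} [AddCommMonoid M] [TopologicalSpace M] {f : ℕ → M}
    {k : ℕ} (h : ∀ i < k, f i = 0) : ∑' n, f (n + k) = ∑' n, f n :=
  (add_left_injective k).tsum_eq fun i hi => ⟨i - k, Nat.sub_add_cancel (not_lt.1 (mt (h i) hi))⟩

noncomputable def phiTerm (x : ℕ → ZMod 2) (i : ℕ) : ℝ :=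
  2 * ((x i).val : ℝ) * ((3 : ℝ) ^ (i + 1))⁻¹

theorem abs_phiTerm_sub (x y : ℕ → ZMod 2) (i : ℕ) :
    |phiTerm x i - phiTerm y i| = if x i = y i then 0 else 2 * ((3 : ℝ) ^ (i + 1))⁻¹ := by
  have h01 : ∀ c : ZMod 2, c = 0 ∨ c = 1 := by decide
  unfold phiTerm
  rcases h01 (x i) with hx | hx <;> rcases h01 (y i) with hy | hy <;>
    simp [hx, hy, ZMod.val_one, abs_of_pos]

theorem summable_phiTerm (x : ℕ → ZMod 2) : Summable (phiTerm x) := by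
  refine (summable_geometric_of_lt_one (r := (3 : ℝ)⁻¹) (by norm_num) (by norm_num)).mul_left 2
    |>.of_nonneg_of_le (fun i => by unfold phiTerm; positivity) fun i => ?_
  have hval : ((x i).val : ℝ) ≤ 1 := by exact_mod_cast Nat.le_of_lt_succ (ZMod.val_lt (x i))
  calc phiTerm x i ≤ 2 * 1 * ((3 : ℝ) ^ (i + 1))⁻¹ := by unfold phiTerm; gcongr
    _ ≤ 2 * 3⁻¹ ^ i := by rw [← inv_pow, pow_succ]; gcongr <;> norm_num

theorem phiC_sub_eq_tsum (x y : ℕ → ZMod 2) :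
    phiC x - phiC y = ∑' i, (phiTerm x i - phiTerm y i) :=
  ((summable_phiTerm x).tsum_sub (summable_phiTerm y)).symm

theorem abs_phiC_sub_le_tsum (x y : ℕ → ZMod 2) :
    |phiC x - phiC y| ≤ ∑' i, |phiTerm x i - phiTerm y i| := by
  rw [phiC_sub_eq_tsum]
  refine norm_tsum_le_tsum_norm (f := fun i => phiTerm x i - phiTerm y i) ?_
  exact (summable_phiTerm x).sub (summable_phiTerm y) |>.abs

theorem tsum_abs_phiTerm_sub_le (x y : ℕ → ZMod 2) :
    ∑' i, |phiTerm x i - phiTerm y i| ≤ 3 * |phiC x - phiC y| := by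
  classical
  by_cases hxy : x = y
  · simp [hxy]
  obtain ⟨i₀, hne, hmin⟩ : ∃ i₀, x i₀ ≠ y i₀ ∧ ∀ i < i₀, x i = y i :=
    have h : ∃ i, x i ≠ y i := Function.ne_iff.1 hxy
    ⟨Nat.find h, Nat.find_spec h, fun i hi => not_not.1 (Nat.find_min h hi)⟩
  have hzero : ∀ i < i₀, |phiTerm x i - phiTerm y i| = 0 := fun i hi => by
    rw [abs_phiTerm_sub, if_pos (hmin i hi)]
  rw [← tsum_nat_add_eq_tsum hzero, phiC_sub_eq_tsum,
    ← tsum_nat_add_eq_tsum fun i hi => abs_eq_zero.1 (hzero i hi)]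
  refine tsum_abs_le_three_mul_abs_tsum (a := ((3 : ℝ) ^ (i₀ + 1))⁻¹) ?_ fun n => ?_
  · rw [abs_phiTerm_sub, zero_add, if_neg hne]
  · rw [abs_phiTerm_sub]
    split_ifs
    · positivity
    · refine le_of_eq ?_
      rw [mul_assoc, inv_pow, ← mul_inv, ← pow_add]
      ring_nf

theorem suppZ_add (z w : ℕ × ℕ → ZMod 2) : suppZ (z + w) = {p | z p ≠ w p} := by
  ext p
  exact (show ∀ a b : ZMod 2, a + b = 1 ↔ a ≠ b by decide) (z p) (w p)

theorem wt_ne_top (p : ℕ × ℕ) : wt p ≠ ⊤ :=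
  ENNReal.mul_ne_top ENNReal.ofNat_ne_top (ENNReal.inv_ne_top.2 (pow_ne_zero _ three_ne_zero))

theorem wt_pos (p : ℕ × ℕ) : 0 < wt p :=
  ENNReal.mul_pos two_ne_zero (ENNReal.inv_ne_zero.2 (ENNReal.pow_ne_top ENNReal.ofNat_ne_top))

theorem abs_phiTerm_sub_eq_toReal_indicator (z w : ℕ × ℕ → ZMod 2) (i j : ℕ) :
    |phiTerm (fun i => z (i, j)) i - phiTerm (fun i => w (i, j)) i| =
      ((suppZ (z + w)).indicator wt (i, j)).toReal := by
  rw [abs_phiTerm_sub, suppZ_add, Set.indicator_apply]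
  split_ifs <;> simp_all [wt]

theorem hasSum_tsum_abs_phiTerm_sub (z w : ℕ × ℕ → ZMod 2) (h : nrmZ (z + w) ≠ ⊤) :
    HasSum (fun j => ∑' i, |phiTerm (fun i => z (i, j)) i - phiTerm (fun i => w (i, j)) i|)
      (nrmZ (z + w)).toReal := by
  set g := (suppZ (z + w)).indicator wt
  have hswap : nrmZ (z + w) = ∑' j, ∑' i, g (i, j) := by
    rw [nrmZ, nrmS, ENNReal.tsum_prod', ENNReal.tsum_comm]
  have hg : ∀ p, g p ≠ ⊤ := fun p =>
    ne_top_of_le_ne_top (wt_ne_top p) (Set.indicator_le_self _ _ p)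
  rw [hswap] at h ⊢
  convert ENNReal.hasSum_toReal h using 1
  · ext j
    rw [ENNReal.tsum_toReal_eq fun i => hg (i, j)]
    exact tsum_congr fun i => abs_phiTerm_sub_eq_toReal_indicator z w i j
  · exact ENNReal.tsum_toReal_eq fun j => ne_top_of_le_ne_top h (ENNReal.le_tsum j)

theorem suppZ_add_subset (z w : ℕ × ℕ → ZMod 2) : suppZ (z + w) ⊆ suppZ z ∪ suppZ w :=
  fun p => (show ∀ a b : ZMod 2, a + b = 1 → a = 1 ∨ b = 1 by decide) (z p) (w p)

theorem nrmZ_add_le (z w : ℕ × ℕ → ZMod 2) : nrmZ (z + w) ≤ nrmZ z + nrmZ w :=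
  (nrmS_mono (suppZ_add_subset z w)).trans (nrmS_union_le _ _)

theorem wt_le_nrmZ {z : ℕ × ℕ → ZMod 2} {p : ℕ × ℕ} (h : p ∈ suppZ z) : wt p ≤ nrmZ z :=
  (Set.indicator_of_mem h wt).symm.trans_le (ENNReal.le_tsum p)

theorem nrmZ_eq_zero_iff (z : ℕ × ℕ → ZMod 2) : nrmZ z = 0 ↔ z = 0 := by
  refine ⟨fun h => funext fun p => ?_, fun h => ?_⟩
  · by_contra hp
    have hp1 : p ∈ suppZ z := (show ∀ a : ZMod 2, a ≠ 0 → a = 1 by decide) _ hp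
    exact (wt_pos p).ne' (nonpos_iff_eq_zero.1 (h ▸ wt_le_nrmZ hp1))
  · simp [h, nrmZ, nrmS, suppZ]

theorem nrmZ_le_of_eventually_eq {v : ℕ → ℕ × ℕ → ZMod 2} {z : ℕ × ℕ → ZMod 2}
    (hv : ∀ p, ∀ᶠ m in atTop, v m p = z p) {c : ℝ≥0∞} (hc : ∀ᶠ m in atTop, nrmZ (v m) ≤ c) :
    nrmZ z ≤ c := by
  rw [nrmZ, nrmS, ENNReal.tsum_eq_iSup_sum]
  refine iSup_le fun F => ?_
  obtain ⟨m, hmF, hmc⟩ := (((eventually_all_finset F).2 fun p _ => hv p).and hc).exists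
  calc ∑ p ∈ F, (suppZ z).indicator wt p = ∑ p ∈ F, (suppZ (v m)).indicator wt p :=
        Finset.sum_congr rfl fun p hp => by simp [Set.indicator_apply, suppZ, hmF p hp]
    _ ≤ nrmZ (v m) := ENNReal.sum_le_tsum F
    _ ≤ c := hmc

theorem exists_finset_nrmS_diff_lt {S : Set (ℕ × ℕ)} (hS : nrmS S ≠ ⊤) {ε : ℝ≥0∞} (hε : 0 < ε) :
    ∃ F : Finset (ℕ × ℕ), nrmS (S \ F) < ε := by
  obtain ⟨F, hF⟩ := ((ENNReal.tendsto_tsum_compl_atTop_zero hS).eventually_lt_const hε).exists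
  refine ⟨F, ?_⟩
  rwa [nrmS, Set.sdiff_eq, Set.inter_comm, ← Set.indicator_indicator, ← tsum_subtype]

theorem nrmS_finset_lt_top (F : Finset (ℕ × ℕ)) : nrmS F < ⊤ := by
  rw [nrmS, ← tsum_subtype, Finset.tsum_subtype']
  exact ENNReal.sum_lt_top.2 fun p _ => (wt_ne_top p).lt_top

noncomputable def nrmH (z : Hgrp) : ℝ := (nrmZ z).toReal

theorem nrmH_add_le (z w : Hgrp) : nrmH (z + w) ≤ nrmH z + nrmH w :=
  (ENNReal.toReal_mono (ENNReal.add_ne_top.2 ⟨z.2.ne, w.2.ne⟩) (nrmZ_add_le z w)).trans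
    ENNReal.toReal_add_le

theorem nrmH_add_eq_zero_iff (z w : Hgrp) : nrmH (z + w) = 0 ↔ z = w := by
  rw [nrmH, ENNReal.toReal_eq_zero_iff, or_iff_left (z + w).2.ne, nrmZ_eq_zero_iff,
    AddSubgroup.coe_add, CharTwo.add_eq_zero, Subtype.coe_inj]

theorem apply_eq_of_nrmH_add_lt {z w : Hgrp} {p : ℕ × ℕ} (h : nrmH (z + w) < (wt p).toReal) :
    (z : ℕ × ℕ → ZMod 2) p = (w : ℕ × ℕ → ZMod 2) p := by
  by_contra hne
  have hp : p ∈ suppZ (↑z + ↑w) := by rw [suppZ_add]; exact hne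
  exact h.not_ge (ENNReal.toReal_mono (z + w).2.ne (wt_le_nrmZ hp))

theorem exists_tendsto_nrmH_of_cauchy (u : ℕ → Hgrp)
    (hu : ∀ ε > 0, ∃ N, ∀ m ≥ N, ∀ n ≥ N, nrmH (u m + u n) < ε) :
    ∃ z : Hgrp, ∀ ε > 0, ∃ N, ∀ n ≥ N, nrmH (u n + z) < ε := by
  have hstable : ∀ p, ∃ a : ZMod 2, ∀ᶠ m in atTop, (u m : ℕ × ℕ → ZMod 2) p = a := fun p => by
    obtain ⟨N, hN⟩ := hu (wt p).toReal (ENNReal.toReal_pos (wt_pos p).ne' (wt_ne_top p))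
    exact ⟨(u N : ℕ × ℕ → ZMod 2) p,
      eventually_atTop.2 ⟨N, fun m hm => apply_eq_of_nrmH_add_lt (hN m hm N le_rfl)⟩⟩
  choose z hz using hstable
  have hclose : ∀ ε > 0, ∃ N, ∀ n ≥ N, nrmZ (u n + z) ≤ ENNReal.ofReal ε := fun ε hε => by
    obtain ⟨N, hN⟩ := hu ε hε
    refine ⟨N, fun n hn => nrmZ_le_of_eventually_eq (v := fun m => u n + u m)
      (fun p => (hz p).mono fun m hm => by simp [hm]) (eventually_atTop.2 ⟨N, fun m hm => ?_⟩)⟩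
    exact (ENNReal.le_ofReal_iff_toReal_le (u n + u m).2.ne hε.le).2 (hN n hn m hm).le
  obtain ⟨N, hN⟩ := hclose 1 one_pos
  have hzH : z ∈ Hgrp := CharTwo.add_cancel_left (u N : ℕ × ℕ → ZMod 2) z ▸
    Hgrp.add_mem (u N).2 ((hN N le_rfl).trans_lt ENNReal.ofReal_lt_top)
  refine ⟨⟨z, hzH⟩, fun ε hε => ?_⟩
  obtain ⟨N, hN⟩ := hclose (ε / 2) (half_pos hε)
  exact ⟨N, fun n hn =>
    (ENNReal.toReal_le_of_le_ofReal (half_pos hε).le (hN n hn)).trans_lt (half_lt_self hε)⟩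

noncomputable def finsetIndicatorH (F : Finset (ℕ × ℕ)) : Hgrp :=
  ⟨(F : Set (ℕ × ℕ)).indicator 1, (nrmS_mono fun _ hp =>
    Set.mem_of_indicator_ne_zero (ne_of_eq_of_ne hp one_ne_zero)).trans_lt (nrmS_finset_lt_top F)⟩

theorem exists_nrmH_add_finsetIndicatorH_lt (z : Hgrp) {ε : ℝ} (hε : 0 < ε) :
    ∃ F, nrmH (z + finsetIndicatorH F) < ε := by
  classical
  obtain ⟨F, hF⟩ := exists_finset_nrmS_diff_lt z.2.ne (ENNReal.ofReal_pos.2 hε)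
  refine ⟨{p ∈ F | (z : ℕ × ℕ → ZMod 2) p = 1}, ENNReal.toReal_lt_of_lt_ofReal ?_⟩
  refine (nrmS_mono fun p hp => ?_).trans_lt hF
  have h01 : ∀ a : ZMod 2, a = 0 ∨ a = 1 := by decide
  rcases h01 ((z : ℕ × ℕ → ZMod 2) p) with h | h <;> by_cases hpF : p ∈ F <;>
    simp_all [finsetIndicatorH, suppZ, Set.indicator_apply]

theorem summable_dH (z w : Hgrp) :
    Summable fun j => |phiC (fun i => (z : ℕ × ℕ → ZMod 2) (i, j)) -
      phiC (fun i => (w : ℕ × ℕ → ZMod 2) (i, j))| :=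
  (hasSum_tsum_abs_phiTerm_sub z w (z + w).2.ne).summable.of_nonneg_of_le
    (fun _ => abs_nonneg _) fun _ => abs_phiC_sub_le_tsum _ _

theorem dH_le_nrmH_add (z w : Hgrp) : dH z w ≤ nrmH (z + w) :=
  hasSum_le (fun _ => abs_phiC_sub_le_tsum _ _) (summable_dH z w).hasSum
    (hasSum_tsum_abs_phiTerm_sub z w (z + w).2.ne)

theorem nrmH_add_le_three_mul_dH (z w : Hgrp) : nrmH (z + w) ≤ 3 * dH z w :=
  hasSum_le (fun _ => tsum_abs_phiTerm_sub_le _ _) (hasSum_tsum_abs_phiTerm_sub z w (z + w).2.ne)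
    ((summable_dH z w).hasSum.mul_left 3)

theorem dH_nonneg (z w : Hgrp) : 0 ≤ dH z w :=
  tsum_nonneg fun _ => abs_nonneg _

theorem dH_comm (z w : Hgrp) : dH z w = dH w z :=
  tsum_congr fun _ => abs_sub_comm _ _

theorem dH_eq_zero_iff (z w : Hgrp) : dH z w = 0 ↔ z = w := by
  refine ⟨fun h => (nrmH_add_eq_zero_iff z w).1 ?_, fun h => by simp [h, dH]⟩
  exact le_antisymm (by simpa [h] using nrmH_add_le_three_mul_dH z w) ENNReal.toReal_nonneg

theorem dH_triangle (z w v : Hgrp) : dH z v ≤ dH z w + dH w v := by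
  rw [dH, dH, dH, ← (summable_dH z w).tsum_add (summable_dH w v)]
  exact (summable_dH z v).tsum_le_tsum (fun _ => abs_sub_le _ _ _)
    ((summable_dH z w).add (summable_dH w v))

theorem exists_tendsto_dH_of_cauchy (u : ℕ → Hgrp)
    (hu : ∀ ε : ℝ, 0 < ε → ∃ N : ℕ, ∀ m ≥ N, ∀ n ≥ N, dH (u m) (u n) < ε) :
    ∃ z : Hgrp, ∀ ε : ℝ, 0 < ε → ∃ N : ℕ, ∀ n ≥ N, dH (u n) z < ε := by
  obtain ⟨z, hz⟩ := exists_tendsto_nrmH_of_cauchy u fun ε hε => by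
    obtain ⟨N, hN⟩ := hu (ε / 3) (by positivity)
    exact ⟨N, fun m hm n hn => by linarith [nrmH_add_le_three_mul_dH (u m) (u n), hN m hm n hn]⟩
  exact ⟨z, fun ε hε => (hz ε hε).imp fun N hN n hn => (dH_le_nrmH_add _ _).trans_lt (hN n hn)⟩

theorem exists_countable_dense_dH :
    ∃ D : Set Hgrp, D.Countable ∧ ∀ z : Hgrp, ∀ ε : ℝ, 0 < ε → ∃ w ∈ D, dH z w < ε :=
  ⟨Set.range finsetIndicatorH, Set.countable_range _, fun z _ hε =>
    let ⟨F, hF⟩ := exists_nrmH_add_finsetIndicatorH_lt z hε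
    ⟨_, Set.mem_range_self F, (dH_le_nrmH_add _ _).trans_lt hF⟩⟩

theorem dH_add_add_le (z w z' w' : Hgrp) : dH (z + w) (z' + w') ≤ 3 * (dH z z' + dH w w') :=
  calc dH (z + w) (z' + w') ≤ nrmH (z + z' + (w + w')) := by
        rw [add_add_add_comm]; exact dH_le_nrmH_add _ _
    _ ≤ nrmH (z + z') + nrmH (w + w') := nrmH_add_le _ _
    _ ≤ 3 * (dH z z' + dH w w') := by
        linarith [nrmH_add_le_three_mul_dH z z', nrmH_add_le_three_mul_dH w w']

/-- `H = {z : ℕ × ℕ → ZMod 2 | ‖z‖ < ∞}` is a subgroup of the product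
group `(ZMod 2)^(ℕ × ℕ)` with pointwise addition mod 2, and, equipped with `d_H`, `H` is a
Polish group: `d_H` is a complete, separable metric on `H`, and addition on `H` is
continuous with respect to `d_H`. -/
theorem statement10 :
    -- `H` is a subgroup of the product group
    (∃ S : AddSubgroup ((ℕ × ℕ) → ZMod 2), (S : Set ((ℕ × ℕ) → ZMod 2)) = {z | nrmZ z < ⊤}) ∧
    -- `d_H` is a metric on `H`
    (∀ z w : ↥Hgrp, 0 ≤ dH z w) ∧
    (∀ z w : ↥Hgrp, dH z w = dH w z) ∧
    (∀ z w : ↥Hgrp, dH z w = 0 ↔ z = w) ∧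
    (∀ z w v : ↥Hgrp, dH z v ≤ dH z w + dH w v) ∧
    -- `d_H` is complete
    (∀ u : ℕ → ↥Hgrp,
      (∀ ε : ℝ, 0 < ε → ∃ N : ℕ, ∀ m ≥ N, ∀ n ≥ N, dH (u m) (u n) < ε) →
      ∃ z : ↥Hgrp, ∀ ε : ℝ, 0 < ε → ∃ N : ℕ, ∀ n ≥ N, dH (u n) z < ε) ∧
    -- `d_H` is separable
    (∃ D : Set ↥Hgrp, D.Countable ∧ ∀ z : ↥Hgrp, ∀ ε : ℝ, 0 < ε → ∃ w ∈ D, dH z w < ε) ∧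
    -- addition on `H` is continuous with respect to `d_H`
    (∀ z w : ↥Hgrp, ∀ ε : ℝ, 0 < ε → ∃ δ : ℝ, 0 < δ ∧ ∀ z' w' : ↥Hgrp,
      dH z z' < δ → dH w w' < δ → dH (z + w) (z' + w') < ε) :=
  ⟨⟨Hgrp, rfl⟩, dH_nonneg, dH_comm, dH_eq_zero_iff, dH_triangle, exists_tendsto_dH_of_cauchy,
    exists_countable_dense_dH, fun z w ε hε => ⟨ε / 6, by positivity, fun z' w' hz hw => by
      linarith [dH_add_add_le z w z' w']⟩⟩
end
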